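/- arXiv:2409.08993 — 13 statements merged into one kernel-verified Lean document; each statement's English description precedes it below -/
import Mathlib

section
/- Let d > 0 and let (a,b) be a pair of reals with a ≤ b and a > 0. Then for every ideal location t ∈ ℝ, c(t, a, b) ≥ c(t, 0, b − a). Symmetrically, if a ≤ b and b < 0, then for every t ∈ ℝ, c(t, a, b) ≥ c(t, a − b, 0). -/
open MeasureTheory

noncomputable section

/-- Shrink map: collapse interval [a,b] to the point a. -/
def shrink (a b t : ℝ) : ℝ :=
  if t ≤ a then t else if t ≤ b then a else t - (b - a)

/-- Cost of an agent at ideal location `t` under range `(a,b)`. -/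
def cost (t a b : ℝ) : ℝ := |shrink a b t - shrink a b 0|

/-- Social cost. -/
def SC (n : ℕ) (x : Fin n → ℝ) (a b : ℝ) : ℝ := ∑ i, cost (x i) a b

/-- Maximum cost. -/
def MC (n : ℕ) (x : Fin n → ℝ) (a b : ℝ) : ℝ :=
  sSup (Set.range fun i => cost (x i) a b)

/-- Optimal social cost over feasible ranges. -/
def OPTSC (n : ℕ) (d : ℝ) (x : Fin n → ℝ) : ℝ :=
  sInf {v : ℝ | ∃ a b : ℝ, a ≤ b ∧ b - a ≤ d ∧ v = SC n x a b}

/-- Optimal maximum cost over feasible ranges. -/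
def OPTMC (n : ℕ) (d : ℝ) (x : Fin n → ℝ) : ℝ :=
  sInf {v : ℝ | ∃ a b : ℝ, a ≤ b ∧ b - a ≤ d ∧ v = MC n x a b}

open Classical in
/-- The set D(x) used by Mechanism 1. -/
def Dset (n : ℕ) (d : ℝ) (x : Fin n → ℝ) : Set ℝ :=
  {y : ℝ | (Finset.univ.filter fun i => y + d ≤ x i).card ≤
           (Finset.univ.filter fun i => x i ≤ y).card}

/-- Mechanism 1. -/
def mech1 (n : ℕ) (d : ℝ) (x : Fin n → ℝ) : ℝ × ℝ :=
  if 0 ≤ sInf (Dset n d x) then (0, d)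
  else if sInf (Dset n d x) ≤ -d then (-d, 0)
  else (sInf (Dset n d x), sInf (Dset n d x) + d)

/-- Leftmost agent location. -/
def xleft (n : ℕ) (x : Fin n → ℝ) : ℝ := sInf (Set.range x)

/-- Rightmost agent location. -/
def xright (n : ℕ) (x : Fin n → ℝ) : ℝ := sSup (Set.range x)

/-- Mechanism 2. -/
def mech2 (n : ℕ) (d : ℝ) (x : Fin n → ℝ) : ℝ × ℝ :=
  if 0 ≤ xleft n x then (0, d)
  else if xleft n x ≤ -d then (-d, 0)
  else (xleft n x, xleft n x + d)

/-- Mechanism 3. -/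
def mech3 (n : ℕ) (d : ℝ) (x : Fin n → ℝ) : ℝ × ℝ :=
  (min (xleft n x) 0, min (xleft n x) 0 + d)

/-- The profile where agents in `S` report `x'` and all others report `x`. -/
def misreport (n : ℕ) (S : Finset (Fin n)) (x x' : Fin n → ℝ) : Fin n → ℝ :=
  fun j => if j ∈ S then x' j else x j

theorem stmt0 (d : ℝ) (hd : 0 < d) (a b : ℝ) (hab : a ≤ b) :
    (0 < a → ∀ t : ℝ, cost t 0 (b - a) ≤ cost t a b) ∧
    (b < 0 → ∀ t : ℝ, cost t (a - b) 0 ≤ cost t a b) := by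
  constructor
  · intro ha t
    have h0 : shrink a b 0 = 0 := by simp [shrink, ha.le]
    have h1 : shrink 0 (b - a) 0 = 0 := by simp [shrink]
    rw [cost, cost, h0, h1, sub_zero, sub_zero]
    simp only [shrink]
    split_ifs <;>
      (rw [abs_le]; constructor <;>
        linarith [le_abs_self t, neg_abs_le t, le_abs_self a, neg_abs_le a,
          le_abs_self (t - (b - a)), neg_abs_le (t - (b - a))])
  · intro hb t
    have h0 : shrink a b 0 = a - b := by
      simp only [shrink]
      split_ifs <;> linarith
    have h1 : shrink (a - b) 0 0 = a - b := by
      simp only [shrink]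
      split_ifs <;> linarith
    rw [cost, cost, h0, h1]
    simp only [shrink]
    split_ifs <;>
      (rw [abs_le]; constructor <;>
        linarith [le_abs_self (t - (a - b)), neg_abs_le (t - (a - b)),
          le_abs_self (a - (a - b)), neg_abs_le (a - (a - b)),
          le_abs_self (t - (b - a) - (a - b)), neg_abs_le (t - (b - a) - (a - b))])
end
end

section
/- Let d > 0 and let (a,b) be a pair of reals with a ≤ b and b − a < d. Then for every ideal location t ∈ ℝ, c(t, a, b) ≥ c(t, a, a + d). -/
open MeasureTheory

noncomputable section

theorem stmt1 (d : ℝ) (hd : 0 < d) (a b : ℝ) (hab : a ≤ b) (hlen : b - a < d) :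
    ∀ t : ℝ, cost t a (a + d) ≤ cost t a b := by
  intro t
  unfold cost shrink
  split_ifs <;>
    (rw [← Real.sqrt_sq_eq_abs]; try rw [← Real.sqrt_sq_eq_abs]) <;>
    exact Real.sqrt_le_sqrt (by nlinarith)
end
end

section
/- For every location profile x ∈ ℝⁿ (n ≥ 1), the range output by Mechanism 1 minimizes the social cost: for every feasible range (a,b), SC(x, f₁(x)) ≤ SC(x, a, b), where f₁ denotes Mechanism 1. -/
open MeasureTheory

noncomputable section

namespace Stmt2Aux

open MeasureTheory
lemma int_stepIic (c p q : ℝ) (hpq : p ≤ q) :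
    (∫ y in p..q, if y ≤ c then (1:ℝ) else 0) = min q c - min p c := by
  have h1 : (fun y => if y ≤ c then (1:ℝ) else 0) = Set.indicator (Set.Iic c) (fun _ => (1:ℝ)) := by
    ext y; simp [Set.indicator, Set.mem_Iic]
  rw [intervalIntegral.integral_of_le hpq, h1,
    MeasureTheory.setIntegral_indicator measurableSet_Iic]
  have h2 : Set.Ioc p q ∩ Set.Iic c = Set.Ioc p (min q c) := by
    ext y; simp only [Set.mem_inter_iff, Set.mem_Ioc, Set.mem_Iic, le_min_iff]; tauto
  rw [h2, MeasureTheory.setIntegral_const, measureReal_def, Real.volume_Ioc, smul_eq_mul, mul_one]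
  rcases le_total c p with h | h
  · rw [min_eq_right h, min_eq_right (le_trans h hpq)]
    have : c - p ≤ 0 := by linarith
    simp [ENNReal.ofReal_eq_zero.2 this]
  · rw [min_eq_left h, ENNReal.toReal_ofReal (by simp [le_min_iff]; constructor <;> linarith)]

lemma int_stepIci (c p q : ℝ) (hpq : p ≤ q) :
    (∫ y in p..q, if c ≤ y then (1:ℝ) else 0) = max q c - max p c := by
  have h0 : (fun y => if c ≤ y then (1:ℝ) else 0) =ᵐ[volume.restrict (Set.Ioc p q)]
      (fun y => if c < y then (1:ℝ) else 0) := by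
    refine (MeasureTheory.ae_restrict_of_ae ?_)
    have : {y : ℝ | ¬ ((if c ≤ y then (1:ℝ) else 0) = (if c < y then (1:ℝ) else 0))} ⊆ {c} := by
      intro y hy
      simp only [Set.mem_setOf_eq] at hy
      by_contra hne
      rcases lt_trichotomy y c with h | h | h
      · simp [not_le.2 h, not_lt.2 h.le] at hy
      · exact hne h
      · simp [h.le, h] at hy
    exact MeasureTheory.ae_iff.2 (measure_mono_null this (Real.volume_singleton))
  rw [intervalIntegral.integral_of_le hpq, MeasureTheory.integral_congr_ae h0]
  have h1 : (fun y => if c < y then (1:ℝ) else 0) = Set.indicator (Set.Ioi c) (fun _ => (1:ℝ)) := by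
    ext y; simp [Set.indicator, Set.mem_Ioi]
  rw [h1, MeasureTheory.setIntegral_indicator measurableSet_Ioi]
  have h2 : Set.Ioc p q ∩ Set.Ioi c = Set.Ioc (max p c) q := by
    ext y; simp only [Set.mem_inter_iff, Set.mem_Ioc, Set.mem_Ioi, max_lt_iff]; tauto
  rw [h2, MeasureTheory.setIntegral_const, measureReal_def, Real.volume_Ioc, smul_eq_mul, mul_one]
  rcases le_total c p with h | h
  · rw [max_eq_left h, max_eq_left (le_trans h hpq), ENNReal.toReal_ofReal (by linarith)]
  · rw [max_eq_right h]
    rcases le_total c q with h' | h'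
    · rw [max_eq_left h', ENNReal.toReal_ofReal (by linarith)]
    · rw [max_eq_right h']
      have : q - c ≤ 0 := by linarith
      simp [ENNReal.ofReal_eq_zero.2 this]

lemma intble_stepIic (c p q : ℝ) :
    IntervalIntegrable (fun y => if y ≤ c then (1:ℝ) else 0) volume p q := by
  apply MeasureTheory.IntegrableOn.intervalIntegrable
  have h1 : (fun y => if y ≤ c then (1:ℝ) else 0) = Set.indicator (Set.Iic c) (fun _ => (1:ℝ)) := by
    ext y; simp [Set.indicator, Set.mem_Iic]
  rw [h1]
  exact (integrableOn_const measure_Icc_lt_top.ne).indicator measurableSet_Iic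

lemma intble_stepIci (c p q : ℝ) :
    IntervalIntegrable (fun y => if c ≤ y then (1:ℝ) else 0) volume p q := by
  apply MeasureTheory.IntegrableOn.intervalIntegrable
  have h1 : (fun y => if c ≤ y then (1:ℝ) else 0) = Set.indicator (Set.Ici c) (fun _ => (1:ℝ)) := by
    ext y; simp [Set.indicator, Set.mem_Ici]
  rw [h1]
  exact (integrableOn_const measure_Icc_lt_top.ne).indicator measurableSet_Ici

/- the overlap function -/
def w (t a b : ℝ) : ℝ := max 0 (min b (max t 0) - max a (min t 0))

lemma w_phi (t A d : ℝ) (h1 : -d ≤ A) (h2 : A ≤ 0) :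
    w t A (A + d) = min (A + d) (max t 0) + min (-A) (max (-t) 0) := by
  unfold w
  rcases le_total 0 t with ht | ht <;>
    [ (rw [max_eq_left ht, min_eq_right ht, max_eq_right (by linarith : -t ≤ 0)]);
      (rw [max_eq_right ht, min_eq_left ht, max_eq_left (by linarith : 0 ≤ -t)])] <;>
  · simp only [min_def, max_def]
    split_ifs <;> linarith

lemma w_norm (t a b d : ℝ) (hd : 0 < d) (hab : a ≤ b) (hba : b - a ≤ d) :
    w t a b ≤ w t (max (-d) (min a 0)) (max (-d) (min a 0) + d) := by
  have h1 : -d ≤ max (-d) (min a 0) := le_max_left _ _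
  have h2 : max (-d) (min a 0) ≤ 0 := max_le (by linarith) (min_le_right _ _)
  rw [w_phi t _ d h1 h2]
  unfold w
  rcases le_total 0 t with ht | ht <;>
    [ (rw [max_eq_left ht, min_eq_right ht, max_eq_right (by linarith : -t ≤ 0)]);
      (rw [max_eq_right ht, min_eq_left ht, max_eq_left (by linarith : 0 ≤ -t)])] <;>
  rcases min_cases a (0:ℝ) with ⟨f1, hf1⟩ | ⟨f1, hf1⟩ <;> rw [f1] <;>
  · simp only [min_def, max_def]
    split_ifs <;> linarith

/- per-agent difference as an integral -/
lemma phi_diff (t d p q : ℝ) (hd : 0 < d) (hp : -d ≤ p) (hq : q ≤ 0) (hpq : p ≤ q) :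
    w t q (q + d) - w t p (p + d)
      = ∫ y in p..q, ((if y + d ≤ t then (1:ℝ) else 0) - (if t ≤ y then (1:ℝ) else 0)) := by
  have hp0 : p ≤ 0 := le_trans hpq hq
  have hq0 : -d ≤ q := le_trans hp hpq
  have e1 : (fun y => if y + d ≤ t then (1:ℝ) else 0) = (fun y => if y ≤ t - d then (1:ℝ) else 0) := by
    ext y
    by_cases h : y + d ≤ t
    · rw [if_pos h, if_pos (by linarith)]
    · rw [if_neg h, if_neg (by intro h'; exact h (by linarith))]
  rw [intervalIntegral.integral_sub (by rw [e1]; exact intble_stepIic _ _ _) (intble_stepIci _ _ _)]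
  rw [e1, int_stepIic _ _ _ hpq, int_stepIci _ _ _ hpq,
    w_phi t q d hq0 hq, w_phi t p d hp hp0]
  rcases le_total 0 t with ht | ht
  · rw [max_eq_left ht, max_eq_right (by linarith : -t ≤ 0),
      min_eq_right (by linarith : (0:ℝ) ≤ -q), min_eq_right (by linarith : (0:ℝ) ≤ -p),
      max_eq_right (by linarith : q ≤ t), max_eq_right (by linarith : p ≤ t)]
    simp only [min_def]
    split_ifs <;> linarith
  · rw [max_eq_right ht, max_eq_left (by linarith : 0 ≤ -t),
      min_eq_right (by linarith : (0:ℝ) ≤ q + d), min_eq_right (by linarith : (0:ℝ) ≤ p + d),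
      min_eq_right (by linarith : t - d ≤ q), min_eq_right (by linarith : t - d ≤ p)]
    simp only [min_def, max_def]
    split_ifs <;> linarith



lemma intble_stepd (c d p q : ℝ) :
    IntervalIntegrable (fun y => if y + d ≤ c then (1:ℝ) else 0) volume p q := by
  have e1 : (fun y => if y + d ≤ c then (1:ℝ) else 0)
      = (fun y => if y ≤ c - d then (1:ℝ) else 0) := by
    ext y
    by_cases h : y + d ≤ c
    · rw [if_pos h, if_pos (by linarith)]
    · rw [if_neg h, if_neg (by intro h'; exact h (by linarith))]
  rw [e1]; exact intble_stepIic _ _ _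

lemma shrink_mono (a b : ℝ) : Monotone (shrink a b) := by
  intro s t hst
  unfold shrink
  split_ifs <;> linarith

lemma cost_eq (t a b : ℝ) (hab : a ≤ b) : cost t a b = |t| - w t a b := by
  rcases le_total 0 t with ht | ht
  · have hm := shrink_mono a b ht
    have e : |shrink a b t - shrink a b 0| = shrink a b t - shrink a b 0 :=
      abs_of_nonneg (by linarith)
    rw [cost, e, w, abs_of_nonneg ht, max_eq_left ht, min_eq_right ht]
    unfold shrink
    split_ifs with h1 h2 h3 h4 h5 h6 h7 h8 <;>
      rcases min_cases b t with ⟨e4, he4⟩ | ⟨e4, he4⟩ <;> rw [e4] <;>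
      rcases max_cases a (0:ℝ) with ⟨e7, he7⟩ | ⟨e7, he7⟩ <;> rw [e7] <;>
      rcases max_cases (0:ℝ) (min b t - max a 0) with ⟨e8, he8⟩ | ⟨e8, he8⟩ <;>
        simp only [e4, e7] at e8 he8 <;> rw [e8] <;> linarith
  · have hm := shrink_mono a b ht
    have e : |shrink a b t - shrink a b 0| = shrink a b 0 - shrink a b t := by
      rw [abs_of_nonpos (by linarith : shrink a b t - shrink a b 0 ≤ 0)]; ring
    rw [cost, e, w, abs_of_nonpos ht, max_eq_right ht, min_eq_left ht]
    unfold shrink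
    split_ifs with h1 h2 h3 h4 h5 h6 h7 h8 <;>
      rcases min_cases b (0:ℝ) with ⟨e4, he4⟩ | ⟨e4, he4⟩ <;> rw [e4] <;>
      rcases max_cases a t with ⟨e7, he7⟩ | ⟨e7, he7⟩ <;> rw [e7] <;>
      rcases max_cases (0:ℝ) (min b 0 - max a t) with ⟨e8, he8⟩ | ⟨e8, he8⟩ <;>
        simp only [e4, e7] at e8 he8 <;> rw [e8] <;> linarith

lemma SC_eq (n : ℕ) (x : Fin n → ℝ) (a b : ℝ) (hab : a ≤ b) :
    SC n x a b = (∑ i, |x i|) - ∑ i, w (x i) a b := by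
  rw [SC, ← Finset.sum_sub_distrib]
  exact Finset.sum_congr rfl fun i _ => cost_eq (x i) a b hab

lemma Dset_up (n : ℕ) (d : ℝ) (x : Fin n → ℝ) {z y : ℝ} (hz : z ∈ Dset n d x) (hzy : z ≤ y) :
    y ∈ Dset n d x := by
  classical
  simp only [Dset, Set.mem_setOf_eq] at hz ⊢
  refine le_trans (le_trans (Finset.card_le_card ?_) hz) (Finset.card_le_card ?_)
  · intro i hi
    simp only [Finset.mem_filter] at hi ⊢
    exact ⟨hi.1, by linarith [hi.2]⟩
  · intro i hi
    simp only [Finset.mem_filter] at hi ⊢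
    exact ⟨hi.1, by linarith [hi.2]⟩

lemma sum_ind_eq (n : ℕ) (d : ℝ) (x : Fin n → ℝ) (y : ℝ) :
    ∑ i, ((if y + d ≤ x i then (1:ℝ) else 0) - (if x i ≤ y then (1:ℝ) else 0))
      = ((Finset.univ.filter fun i => y + d ≤ x i).card : ℝ)
        - ((Finset.univ.filter fun i => x i ≤ y).card : ℝ) := by
  rw [Finset.sum_sub_distrib]
  congr 1 <;>
  · rw [Finset.card_filter]
    push_cast
    exact Finset.sum_congr rfl fun i _ => by split_ifs <;> simp

lemma mem_Dset_iff (n : ℕ) (d : ℝ) (x : Fin n → ℝ) (y : ℝ) :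
    y ∈ Dset n d x ↔
      ((Finset.univ.filter fun i => y + d ≤ x i).card : ℝ)
        ≤ ((Finset.univ.filter fun i => x i ≤ y).card : ℝ) := by
  simp only [Dset, Set.mem_setOf_eq, Finset.filter_congr_decidable, Nat.cast_le]

end Stmt2Aux

open Stmt2Aux MeasureTheory

theorem stmt2 (n : ℕ) (hn : 1 ≤ n) (d : ℝ) (hd : 0 < d) (x : Fin n → ℝ)
    (a b : ℝ) (hab : a ≤ b) (hba : b - a ≤ d) :
    SC n x (mech1 n d x).1 (mech1 n d x).2 ≤ SC n x a b := by
  have hne : (Dset n d x).Nonempty := by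
    have hU : (Finset.univ : Finset (Fin n)).Nonempty := by
      rw [Finset.univ_nonempty_iff]
      exact Fin.pos_iff_nonempty.mp (by omega)
    refine ⟨Finset.univ.sup' hU x, ?_⟩
    rw [mem_Dset_iff]
    have h1 : (Finset.univ.filter fun i => x i ≤ Finset.univ.sup' hU x) = Finset.univ := by
      apply Finset.filter_true_of_mem
      intro i _
      exact Finset.le_sup' x (Finset.mem_univ i)
    rw [h1]
    exact_mod_cast Finset.card_filter_le _ _
  have hbdd : BddBelow (Dset n d x) := by
    have hU : (Finset.univ : Finset (Fin n)).Nonempty := by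
      rw [Finset.univ_nonempty_iff]
      exact Fin.pos_iff_nonempty.mp (by omega)
    refine ⟨Finset.univ.inf' hU x - d, ?_⟩
    intro y hy
    by_contra hlt
    push_neg at hlt
    rw [mem_Dset_iff] at hy
    have h1 : (Finset.univ.filter fun i => y + d ≤ x i) = Finset.univ := by
      apply Finset.filter_true_of_mem
      intro i _
      have := Finset.inf'_le x (Finset.mem_univ i)
      linarith
    have h2 : (Finset.univ.filter fun i => x i ≤ y) = ∅ := by
      apply Finset.filter_false_of_mem
      intro i _
      have := Finset.inf'_le x (Finset.mem_univ i)
      push_neg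
      linarith
    rw [h1, h2] at hy
    simp at hy
    omega
  set ℓ := sInf (Dset n d x) with hℓdef
  have hmem_of_lt : ∀ y, ℓ < y → y ∈ Dset n d x := by
    intro y hy
    obtain ⟨z, hz, hzy⟩ := exists_lt_of_csInf_lt hne hy
    exact Dset_up n d x hz hzy.le
  have hnot_mem : ∀ y, y < ℓ → y ∉ Dset n d x := by
    intro y hy hmem
    exact absurd (csInf_le hbdd hmem) (not_le.2 hy)
  set A : ℝ := max (-d) (min ℓ 0) with hAdef
  have hA1 : -d ≤ A := le_max_left _ _
  have hA2 : A ≤ 0 := max_le (by linarith) (min_le_right _ _)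
  have hmech : mech1 n d x = (A, A + d) := by
    rw [mech1]
    split_ifs with h1 h2
    · have : A = 0 := by
        rw [hAdef, min_eq_right h1, max_eq_right (by linarith)]
      rw [this]; norm_num
    · have : A = -d := by
        rw [hAdef, min_eq_left (by linarith), max_eq_left (by linarith)]
      rw [this]; norm_num
    · push_neg at h1 h2
      have : A = ℓ := by
        rw [hAdef, min_eq_left (by linarith), max_eq_right (by linarith)]
      rw [this]
  set A' : ℝ := max (-d) (min a 0) with hA'def
  have hA'1 : -d ≤ A' := le_max_left _ _
  have hA'2 : A' ≤ 0 := max_le (by linarith) (min_le_right _ _)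
  rw [hmech, SC_eq n x a b hab, SC_eq n x A (A + d) (by linarith)]
  have step1 : ∑ i, w (x i) a b ≤ ∑ i, w (x i) A' (A' + d) :=
    Finset.sum_le_sum fun i _ => w_norm (x i) a b d hd hab hba
  have step2 : ∑ i, w (x i) A' (A' + d) ≤ ∑ i, w (x i) A (A + d) := by
    have hintble : ∀ (p q : ℝ), ∀ i ∈ (Finset.univ : Finset (Fin n)),
        IntervalIntegrable (fun y =>
          (if y + d ≤ x i then (1:ℝ) else 0) - (if x i ≤ y then (1:ℝ) else 0)) volume p q :=
      fun p q i _ => (intble_stepd (x i) d p q).sub (intble_stepIci (x i) p q)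
    rcases le_total A' A with hc | hc
    · have hdiff : (∑ i, w (x i) A (A + d)) - (∑ i, w (x i) A' (A' + d))
          = ∫ y in A'..A, ∑ i, ((if y + d ≤ x i then (1:ℝ) else 0)
              - (if x i ≤ y then (1:ℝ) else 0)) := by
        rw [← Finset.sum_sub_distrib,
          Finset.sum_congr rfl fun i _ => phi_diff (x i) d A' A hd hA'1 hA2 hc,
          ← intervalIntegral.integral_finset_sum (hintble A' A)]
      have hpos : 0 ≤ ∫ y in A'..A, ∑ i, ((if y + d ≤ x i then (1:ℝ) else 0)
          - (if x i ≤ y then (1:ℝ) else 0)) := by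
        rw [intervalIntegral.integral_of_le hc, MeasureTheory.integral_Ioc_eq_integral_Ioo]
        apply MeasureTheory.setIntegral_nonneg measurableSet_Ioo
        intro y hy
        obtain ⟨hy1, hy2⟩ := hy
        have hyℓ : y < ℓ := by
          by_contra hcon
          push_neg at hcon
          have : A ≤ y := max_le (by linarith) (le_trans (min_le_left _ _) hcon)
          linarith
        have hnd := hnot_mem y hyℓ
        rw [mem_Dset_iff] at hnd
        push_neg at hnd
        rw [sum_ind_eq]
        linarith
      linarith
    · have hdiff : (∑ i, w (x i) A' (A' + d)) - (∑ i, w (x i) A (A + d))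
          = ∫ y in A..A', ∑ i, ((if y + d ≤ x i then (1:ℝ) else 0)
              - (if x i ≤ y then (1:ℝ) else 0)) := by
        rw [← Finset.sum_sub_distrib,
          Finset.sum_congr rfl fun i _ => phi_diff (x i) d A A' hd hA1 hA'2 hc,
          ← intervalIntegral.integral_finset_sum (hintble A A')]
      have hneg : (∫ y in A..A', ∑ i, ((if y + d ≤ x i then (1:ℝ) else 0)
          - (if x i ≤ y then (1:ℝ) else 0))) ≤ 0 := by
        rw [intervalIntegral.integral_of_le hc]
        apply MeasureTheory.setIntegral_nonpos measurableSet_Ioc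
        intro y hy
        obtain ⟨hy1, hy2⟩ := hy
        have hyℓ : ℓ < y := by
          rcases le_or_gt 0 ℓ with h0 | h0
          · exfalso
            have : A = 0 := by
              rw [hAdef, min_eq_right h0, max_eq_right (by linarith)]
            rw [this] at hy1
            linarith
          · have : ℓ ≤ A := by
              rw [hAdef, min_eq_left (by linarith)]
              exact le_max_right _ _
            linarith
        have hmd := hmem_of_lt y hyℓ
        rw [mem_Dset_iff] at hmd
        rw [sum_ind_eq]
        linarith
      linarith
  linarith
end
end

section
/- Mechanism 1 is group strategyproof: for every location profile x ∈ ℝⁿ, every nonempty set of agents S ⊆ {1,…,n}, and every misreport x'_S ∈ ℝ^{|S|}, there exists an agent i ∈ S with c(xᵢ, f₁(x)) ≤ c(xᵢ, f₁(x'_S, x₋_S)), where f₁ denotes Mechanism 1 and (x'_S, x₋_S) is the profile in which agents in S report x'_S and all other agents report truthfully. -/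
open MeasureTheory

noncomputable section

section Aux

lemma shrink_zero {a b : ℝ} (ha : a ≤ 0) (hb : 0 ≤ b) : shrink a b 0 = a := by
  unfold shrink
  split_ifs <;> linarith

lemma cost_formula {d a t : ℝ} (hd : 0 < d) (ha : -d ≤ a) (ha0 : a ≤ 0) :
    cost t a (a + d) = max (a - t) 0 + max (t - (a + d)) 0 := by
  have hz : shrink a (a + d) 0 = a := shrink_zero ha0 (by linarith)
  unfold cost
  rw [hz]
  unfold shrink
  split_ifs with h1 h2
  · rw [abs_of_nonpos (by linarith), max_eq_left (by linarith),
      max_eq_right (by linarith)]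
    ring
  · rw [sub_self, abs_zero, max_eq_right (by linarith), max_eq_right (by linarith)]
    norm_num
  · rw [abs_of_nonneg (by linarith), max_eq_right (by linarith),
      max_eq_left (by linarith)]
    ring

lemma cost_le_left {d a a' t : ℝ} (hd : 0 < d) (ha : -d ≤ a) (haa : a ≤ a') (ha' : a' ≤ 0)
    (ht : t ≤ a + d) : cost t a (a + d) ≤ cost t a' (a' + d) := by
  rw [cost_formula hd ha (by linarith), cost_formula hd (by linarith) ha']
  have e1 : max (t - (a + d)) 0 = 0 := max_eq_right (by linarith)
  have e2 : max (a - t) 0 ≤ max (a' - t) 0 := max_le_max (by linarith) le_rfl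
  have e3 : (0:ℝ) ≤ max (t - (a' + d)) 0 := le_max_right _ _
  linarith

lemma cost_le_right {d a a' t : ℝ} (hd : 0 < d) (ha' : -d ≤ a') (haa : a' ≤ a) (ha : a ≤ 0)
    (ht : a ≤ t) : cost t a (a + d) ≤ cost t a' (a' + d) := by
  rw [cost_formula hd (by linarith) ha, cost_formula hd ha' (by linarith)]
  have e1 : max (a - t) 0 = 0 := max_eq_right (by linarith)
  have e2 : max (t - (a + d)) 0 ≤ max (t - (a' + d)) 0 := max_le_max (by linarith) le_rfl
  have e3 : (0:ℝ) ≤ max (a' - t) 0 := le_max_right _ _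
  linarith

lemma Dset_mem_mono {n : ℕ} {d : ℝ} {x : Fin n → ℝ} {y z : ℝ} (hyz : y ≤ z)
    (hy : y ∈ Dset n d x) : z ∈ Dset n d x := by
  classical
  simp only [Dset, Set.mem_setOf_eq] at hy ⊢
  calc (Finset.univ.filter fun i => z + d ≤ x i).card
      ≤ (Finset.univ.filter fun i => y + d ≤ x i).card := by
        apply Finset.card_le_card
        intro i hi
        simp only [Finset.mem_filter, Finset.mem_univ, true_and] at hi ⊢
        linarith
    _ ≤ (Finset.univ.filter fun i => x i ≤ y).card := hy
    _ ≤ (Finset.univ.filter fun i => x i ≤ z).card := by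
        apply Finset.card_le_card
        intro i hi
        simp only [Finset.mem_filter, Finset.mem_univ, true_and] at hi ⊢
        linarith

lemma Dset_nonempty {n : ℕ} (hn : 1 ≤ n) {d : ℝ} (hd : 0 < d) (x : Fin n → ℝ) :
    (Dset n d x).Nonempty := by
  classical
  have hne : (Finset.univ : Finset (Fin n)).Nonempty := ⟨⟨0, hn⟩, Finset.mem_univ _⟩
  set M := Finset.univ.sup' hne x with hM
  refine ⟨M, ?_⟩
  simp only [Dset, Set.mem_setOf_eq]
  have h0 : (Finset.univ.filter fun i => M + d ≤ x i) = ∅ := by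
    apply Finset.filter_eq_empty_iff.mpr
    intro i _
    have : x i ≤ M := Finset.le_sup' x (Finset.mem_univ i)
    intro h
    linarith
  rw [h0]
  simp

lemma Dset_bddBelow {n : ℕ} (hn : 1 ≤ n) {d : ℝ} (hd : 0 < d) (x : Fin n → ℝ) :
    BddBelow (Dset n d x) := by
  classical
  have hne : (Finset.univ : Finset (Fin n)).Nonempty := ⟨⟨0, hn⟩, Finset.mem_univ _⟩
  refine ⟨Finset.univ.inf' hne x - d, ?_⟩
  intro y hy
  by_contra h
  push_neg at h
  simp only [Dset, Set.mem_setOf_eq] at hy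
  have h1 : (Finset.univ.filter fun i => x i ≤ y) = ∅ := by
    apply Finset.filter_eq_empty_iff.mpr
    intro i _
    have : Finset.univ.inf' hne x ≤ x i := Finset.inf'_le x (Finset.mem_univ i)
    intro hxy
    linarith
  have h2 : (Finset.univ.filter fun i => y + d ≤ x i) = Finset.univ := by
    apply Finset.filter_eq_self.mpr
    intro i _
    have : Finset.univ.inf' hne x ≤ x i := Finset.inf'_le x (Finset.mem_univ i)
    linarith
  rw [h1, h2] at hy
  simp only [Finset.card_empty, Finset.card_univ, Fintype.card_fin] at hy
  omega

lemma mem_Dset_of_gt {n : ℕ} {d : ℝ} {x : Fin n → ℝ} {y : ℝ}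
    (hne : (Dset n d x).Nonempty) (h : sInf (Dset n d x) < y) : y ∈ Dset n d x := by
  obtain ⟨z, hz, hzy⟩ := exists_lt_of_csInf_lt hne h
  exact Dset_mem_mono hzy.le hz

lemma not_mem_Dset_of_lt {n : ℕ} {d : ℝ} {x : Fin n → ℝ} {y : ℝ}
    (hbdd : BddBelow (Dset n d x)) (h : y < sInf (Dset n d x)) : y ∉ Dset n d x :=
  fun hy => absurd (csInf_le hbdd hy) (not_le.mpr h)

lemma flip_left {n : ℕ} {d : ℝ} (hd : 0 < d) {x x'' : Fin n → ℝ} {S : Finset (Fin n)}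
    (hagree : ∀ j ∉ S, x'' j = x j) {y : ℝ}
    (h1 : y ∈ Dset n d x) (h2 : y ∉ Dset n d x'') :
    ∃ i ∈ S, x i < y + d := by
  classical
  by_contra hc
  push_neg at hc
  apply h2
  simp only [Dset, Set.mem_setOf_eq] at h1 ⊢
  refine le_trans (le_trans (Finset.card_le_card ?_) h1) (Finset.card_le_card ?_)
  · intro i hi
    simp only [Finset.mem_filter, Finset.mem_univ, true_and] at hi ⊢
    by_cases hiS : i ∈ S
    · exact hc i hiS
    · rw [← hagree i hiS]; exact hi
  · intro i hi
    simp only [Finset.mem_filter, Finset.mem_univ, true_and] at hi ⊢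
    by_cases hiS : i ∈ S
    · exact absurd (le_trans (hc i hiS) hi) (by linarith)
    · rw [hagree i hiS]; exact hi

lemma flip_right {n : ℕ} {d : ℝ} (hd : 0 < d) {x x'' : Fin n → ℝ} {S : Finset (Fin n)}
    (hagree : ∀ j ∉ S, x'' j = x j) {y : ℝ}
    (h1 : y ∈ Dset n d x'') (h2 : y ∉ Dset n d x) :
    ∃ i ∈ S, y < x i := by
  classical
  by_contra hc
  push_neg at hc
  apply h2
  simp only [Dset, Set.mem_setOf_eq] at h1 ⊢
  refine le_trans (le_trans (Finset.card_le_card ?_) h1) (Finset.card_le_card ?_)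
  · intro i hi
    simp only [Finset.mem_filter, Finset.mem_univ, true_and] at hi ⊢
    by_cases hiS : i ∈ S
    · exact absurd (le_trans hi (hc i hiS)) (by linarith)
    · rw [hagree i hiS]; exact hi
  · intro i hi
    simp only [Finset.mem_filter, Finset.mem_univ, true_and] at hi ⊢
    by_cases hiS : i ∈ S
    · exact hc i hiS
    · rw [← hagree i hiS]; exact hi

lemma mech1_eq {n : ℕ} {d : ℝ} (hd : 0 < d) (x : Fin n → ℝ) :
    mech1 n d x = (min (max (sInf (Dset n d x)) (-d)) 0,
      min (max (sInf (Dset n d x)) (-d)) 0 + d) := by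
  unfold mech1
  set l := sInf (Dset n d x)
  split_ifs with h1 h2
  · have : min (max l (-d)) 0 = 0 := min_eq_right (le_max_of_le_left h1)
    rw [this]; norm_num
  · have : min (max l (-d)) 0 = -d := by
      rw [max_eq_right h2]; exact min_eq_left (by linarith)
    rw [this]; norm_num
  · push_neg at h1 h2
    have : min (max l (-d)) 0 = l := by
      rw [max_eq_left h2.le]; exact min_eq_left h1.le
    rw [this]

lemma le_of_forall_Ioo {a b t : ℝ} (hab : a < b) (h : ∀ y, a < y → y < b → t ≤ y) :
    t ≤ a := by
  by_contra hc
  push_neg at hc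
  obtain ⟨y, hy1, hy2⟩ := exists_between (lt_min hc hab)
  have h1 := h y hy1 (lt_of_lt_of_le hy2 (min_le_right _ _))
  have h2 : y < t := lt_of_lt_of_le hy2 (min_le_left _ _)
  linarith

lemma ge_of_forall_Ioo {a b t : ℝ} (hab : a < b) (h : ∀ y, a < y → y < b → y ≤ t) :
    b ≤ t := by
  by_contra hc
  push_neg at hc
  obtain ⟨y, hy1, hy2⟩ := exists_between (show max a t < b from max_lt hab hc)
  have h1 := h y (lt_of_le_of_lt (le_max_left _ _) hy1) hy2
  have h2 : t < y := lt_of_le_of_lt (le_max_right _ _) hy1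
  linarith

end Aux

theorem stmt3 (n : ℕ) (hn : 1 ≤ n) (d : ℝ) (hd : 0 < d) (x : Fin n → ℝ)
    (S : Finset (Fin n)) (hS : S.Nonempty) (x' : Fin n → ℝ) :
    ∃ i ∈ S,
      cost (x i) (mech1 n d x).1 (mech1 n d x).2 ≤
        cost (x i) (mech1 n d (misreport n S x x')).1 (mech1 n d (misreport n S x x')).2 := by
  
  classical
  set x'' := misreport n S x x' with hx''
  have hagree : ∀ j ∉ S, x'' j = x j := by
    intro j hj
    simp [hx'', misreport, hj]
  set l := sInf (Dset n d x) with hl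
  set l' := sInf (Dset n d x'') with hl'
  set A := min (max l (-d)) 0 with hA
  set A' := min (max l' (-d)) 0 with hA'
  have hm : mech1 n d x = (A, A + d) := mech1_eq hd x
  have hm' : mech1 n d x'' = (A', A' + d) := mech1_eq hd x''
  have hAd : -d ≤ A := le_min (le_max_right _ _) (by linarith)
  have hA0 : A ≤ 0 := min_le_right _ _
  have hA'd : -d ≤ A' := le_min (le_max_right _ _) (by linarith)
  have hA'0 : A' ≤ 0 := min_le_right _ _
  have hDne : (Dset n d x).Nonempty := Dset_nonempty hn hd x
  have hDne' : (Dset n d x'').Nonempty := Dset_nonempty hn hd x''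
  have hDbd : BddBelow (Dset n d x) := Dset_bddBelow hn hd x
  have hDbd' : BddBelow (Dset n d x'') := Dset_bddBelow hn hd x''
  rcases lt_trichotomy A A' with hlt | heq | hgt
  · -- interval moved right; leftmost agent of S is fine
    have hAneg : A < 0 := lt_of_lt_of_le hlt hA'0
    have hmax : max l (-d) < 0 := by
      rcases min_lt_iff.mp (hA ▸ hAneg) with h | h
      · exact h
      · linarith
    have hlA : l ≤ A := by rw [hA, min_eq_left hmax.le]; exact le_max_left _ _
    have hA'l : A' ≤ l' := by
      have h1 : -d < A' := lt_of_le_of_lt hAd hlt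
      have h2 : -d < l' := by
        by_contra hc
        push_neg at hc
        rw [hA', max_eq_right hc, min_eq_left (by linarith)] at h1
        linarith
      rw [hA', max_eq_left h2.le]
      exact min_le_left _ _
    obtain ⟨i, hiS, hmin⟩ := S.exists_min_image x hS
    refine ⟨i, hiS, ?_⟩
    rw [hm, hm']
    have hti : x i ≤ A + d := by
      have key : ∀ y, A < y → y < A' → x i - d ≤ y := by
        intro y hy1 hy2
        have hyD : y ∈ Dset n d x := mem_Dset_of_gt hDne (lt_of_le_of_lt hlA hy1)
        have hyD' : y ∉ Dset n d x'' :=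
          not_mem_Dset_of_lt hDbd' (lt_of_lt_of_le hy2 hA'l)
        obtain ⟨i', hi'S, hi'⟩ := flip_left hd hagree hyD hyD'
        have := hmin i' hi'S
        linarith
      have := le_of_forall_Ioo hlt key
      linarith
    exact cost_le_left hd hAd hlt.le hA'0 hti
  · rw [hm, hm', heq]
    obtain ⟨i, hiS⟩ := hS
    exact ⟨i, hiS, le_rfl⟩
  · -- interval moved left; rightmost agent of S is fine
    have hA'neg : A' < 0 := lt_of_lt_of_le hgt hA0
    have hmax' : max l' (-d) < 0 := by
      rcases min_lt_iff.mp (hA' ▸ hA'neg) with h | h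
      · exact h
      · linarith
    have hl'A : l' ≤ A' := by rw [hA', min_eq_left hmax'.le]; exact le_max_left _ _
    have hAl : A ≤ l := by
      have h1 : -d < A := lt_of_le_of_lt hA'd hgt
      have h2 : -d < l := by
        by_contra hc
        push_neg at hc
        rw [hA, max_eq_right hc, min_eq_left (by linarith)] at h1
        linarith
      rw [hA, max_eq_left h2.le]
      exact min_le_left _ _
    obtain ⟨i, hiS, hmax⟩ := S.exists_max_image x hS
    refine ⟨i, hiS, ?_⟩
    rw [hm, hm']
    have hti : A ≤ x i := by
      have key : ∀ y, A' < y → y < A → y ≤ x i := by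
        intro y hy1 hy2
        have hyD' : y ∈ Dset n d x'' := mem_Dset_of_gt hDne' (lt_of_le_of_lt hl'A hy1)
        have hyD : y ∉ Dset n d x :=
          not_mem_Dset_of_lt hDbd (lt_of_lt_of_le hy2 hAl)
        obtain ⟨i', hi'S, hi'⟩ := flip_right hd hagree hyD' hyD
        have := hmax i' hi'S
        linarith
      exact ge_of_forall_Ioo hgt key
    exact cost_le_right hd hA'd hgt.le hA0 hti
end
end

section
/- Mechanism 1 is not strongly group strategyproof: for every even n ≥ 4 and every d > 0, there exist a location profile x ∈ ℝⁿ, a nonempty set S ⊆ {1,…,n}, and a misreport x'_S ∈ ℝ^{|S|} such that c(xᵢ, f₁(x'_S, x₋_S)) ≤ c(xᵢ, f₁(x)) for all i ∈ S and c(xⱼ, f₁(x'_S, x₋_S)) < c(xⱼ, f₁(x)) for some j ∈ S, where f₁ denotes Mechanism 1. -/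
open MeasureTheory

noncomputable section

/-! Place two agents at `d`, one at `-d/2` and the rest at the facility `0`. For `y < 0` at most
one agent lies weakly left of `y` while the two agents at `d` lie weakly right of `y + d`, so
`inf D(x) ≥ 0` and the mechanism outputs `(0, d)`, which costs the agent at `-d/2` exactly `d/2`.
If every agent other than the two at `d` reports `-d/2`, then `-d/2 ∈ D`, so the output becomes
`(a, a + d)` with `-d ≤ a ≤ -d/2`: this range contains `-d/2` and `0`, so every member of the
coalition now has cost `0`. -/

open Finset

lemma cost_eq_zero_of_mem_Icc {t a b : ℝ} (ht : t ∈ Set.Icc a b)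
    (h0 : (0 : ℝ) ∈ Set.Icc a b) : cost t a b = 0 := by
  obtain ⟨hat, htb⟩ := ht
  obtain ⟨ha0, h0b⟩ := h0
  unfold cost shrink
  rw [abs_eq_zero]
  split_ifs <;> linarith

lemma cost_eq_neg_of_nonpos {t b : ℝ} (ht : t ≤ 0) : cost t 0 b = -t := by
  simp only [cost, shrink, if_pos ht, le_refl, if_true, sub_zero, abs_of_nonpos ht]

lemma mech1_eq_clamp {n : ℕ} {d : ℝ} (hd : 0 ≤ d) (x : Fin n → ℝ) :
    mech1 n d x =
      (max (min (sInf (Dset n d x)) 0) (-d), max (min (sInf (Dset n d x)) 0) (-d) + d) := by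
  unfold mech1
  split_ifs with h₀ h₁
  · rw [min_eq_right h₀, max_eq_left (by linarith), zero_add]
  · rw [min_eq_left (by linarith), max_eq_right h₁, neg_add_cancel]
  · rw [min_eq_left (by linarith), max_eq_left (by linarith)]

lemma bddBelow_Dset {n : ℕ} [NeZero n] (d : ℝ) (x : Fin n → ℝ) : BddBelow (Dset n d x) := by
  classical
  refine ⟨univ.inf' univ_nonempty x - |d|, fun y hy => ?_⟩
  by_contra! hy_lt
  have hx : ∀ i, y + |d| < x i := fun i => by linarith [inf'_le x (mem_univ i)]
  simp only [Dset, Set.mem_ofPred_eq] at hy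
  rw [filter_true_of_mem fun i _ => by linarith [hx i, le_abs_self d],
    filter_false_of_mem fun i _ => by linarith [hx i, abs_nonneg d]] at hy
  simp only [card_univ, Fintype.card_fin, card_empty, nonpos_iff_eq_zero] at hy
  exact NeZero.ne n hy

section Counterexample

variable {n : ℕ} {d : ℝ}

def truthProfile (n : ℕ) (d : ℝ) : Fin n → ℝ :=
  fun i => if i.val < 2 then d else if i.val = 2 then -(d / 2) else 0

def coalition (n : ℕ) : Finset (Fin n) := univ.filter fun i => 2 ≤ i.val

def coalitionReport (n : ℕ) (d : ℝ) : Fin n → ℝ :=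
  misreport n (coalition n) (truthProfile n d) fun _ => -(d / 2)

lemma coalitionReport_apply (i : Fin n) :
    coalitionReport n d i = if i.val < 2 then d else -(d / 2) := by
  by_cases hi : i.val < 2
  · simp [coalitionReport, misreport, coalition, truthProfile, hi]
  · simp [coalitionReport, misreport, coalition, hi, not_lt.mp hi]

lemma nonneg_of_mem_Dset_truthProfile (hd : 0 < d) (hn : 2 ≤ n) {y : ℝ}
    (hy : y ∈ Dset n d (truthProfile n d)) : 0 ≤ y := by
  by_contra! hy_neg
  simp only [Dset, Set.mem_ofPred_eq] at hy
  have h_left : (univ.filter fun i => truthProfile n d i ≤ y).card ≤ 1 := by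
    refine card_le_one.mpr fun i hi j hj => ?_
    have val_eq_two : ∀ k, truthProfile n d k ≤ y → k.val = 2 := by
      intro k hk
      unfold truthProfile at hk
      split_ifs at hk with h₁ h₂ <;> first | exact h₂ | linarith
    exact Fin.ext <|
      (val_eq_two i (mem_filter.mp hi).2).trans (val_eq_two j (mem_filter.mp hj).2).symm
  have h_right : 1 < (univ.filter fun i => y + d ≤ truthProfile n d i).card := by
    refine one_lt_card.mpr ⟨⟨0, by omega⟩, ?_, ⟨1, by omega⟩, ?_, by simp⟩ <;>
      simp [truthProfile] <;> linarith
  omega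

lemma neg_half_mem_Dset_coalitionReport (hd : 0 < d) (hn : 4 ≤ n) :
    -(d / 2) ∈ Dset n d (coalitionReport n d) := by
  simp only [Dset, Set.mem_ofPred_eq]
  have h_right : (univ.filter fun i => -(d / 2) + d ≤ coalitionReport n d i).card ≤ 2 := by
    refine (card_le_card_of_injOn Fin.val (t := range 2) (fun i hi => ?_)
      Fin.val_injective.injOn).trans_eq (card_range 2)
    have hi := (mem_filter.mp hi).2
    rw [coalitionReport_apply] at hi
    split_ifs at hi with h
    · simpa using h
    · linarith
  have h_left : 1 < (univ.filter fun i => coalitionReport n d i ≤ -(d / 2)).card :=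
    one_lt_card.mpr ⟨⟨2, by omega⟩, by simp [coalitionReport_apply],
      ⟨3, by omega⟩, by simp [coalitionReport_apply], by simp⟩
  omega

end Counterexample

theorem stmt4_general (n : ℕ) (hn : 4 ≤ n) (d : ℝ) (hd : 0 < d) :
    ∃ (x : Fin n → ℝ) (S : Finset (Fin n)) (x' : Fin n → ℝ), S.Nonempty ∧
      (∀ i ∈ S,
        cost (x i) (mech1 n d (misreport n S x x')).1 (mech1 n d (misreport n S x x')).2 ≤
          cost (x i) (mech1 n d x).1 (mech1 n d x).2) ∧
      (∃ j ∈ S,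
        cost (x j) (mech1 n d (misreport n S x x')).1 (mech1 n d (misreport n S x x')).2 <
          cost (x j) (mech1 n d x).1 (mech1 n d x).2) := by
  have : NeZero n := ⟨by omega⟩
  have h_truth : mech1 n d (truthProfile n d) = (0, d) := by
    rw [mech1_eq_clamp hd.le, min_eq_right (Real.sInf_nonneg fun y hy =>
      nonneg_of_mem_Dset_truthProfile hd (by omega) hy), max_eq_left (by linarith), zero_add]
  set a := max (min (sInf (Dset n d (coalitionReport n d))) 0) (-d)
  have h_report : mech1 n d (coalitionReport n d) = (a, a + d) := mech1_eq_clamp hd.le _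
  have ha_lower : -d ≤ a := le_max_right _ _
  have ha_upper : a ≤ -(d / 2) :=
    max_le ((min_le_left _ _).trans <|
      csInf_le (bddBelow_Dset d _) (neg_half_mem_Dset_coalitionReport hd hn)) (by linarith)
  have h_gain : ∀ i ∈ coalition n, cost (truthProfile n d i) a (a + d) = 0 := by
    intro i hi
    refine cost_eq_zero_of_mem_Icc ?_ ⟨by linarith, by linarith⟩
    simp only [coalition, mem_filter, mem_univ, true_and] at hi
    simp only [truthProfile, if_neg (not_lt.mpr hi)]
    split_ifs <;> constructor <;> linarith
  have h_two : (⟨2, by omega⟩ : Fin n) ∈ coalition n := by simp [coalition]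
  refine ⟨truthProfile n d, coalition n, fun _ => -(d / 2), ⟨_, h_two⟩,
    fun i hi => ?_, ⟨_, h_two, ?_⟩⟩
  · simp only [← coalitionReport.eq_def, h_report, h_truth, h_gain i hi]
    exact abs_nonneg _
  · simp only [← coalitionReport.eq_def, h_report, h_truth, h_gain _ h_two]
    rw [show truthProfile n d ⟨2, _⟩ = -(d / 2) by simp [truthProfile],
      cost_eq_neg_of_nonpos (by linarith)]
    linarith

theorem stmt4 (n : ℕ) (hn : 4 ≤ n) (heven : Even n) (d : ℝ) (hd : 0 < d) :
    ∃ (x : Fin n → ℝ) (S : Finset (Fin n)) (x' : Fin n → ℝ), S.Nonempty ∧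
      (∀ i ∈ S,
        cost (x i) (mech1 n d (misreport n S x x')).1 (mech1 n d (misreport n S x x')).2 ≤
          cost (x i) (mech1 n d x).1 (mech1 n d x).2) ∧
      (∃ j ∈ S,
        cost (x j) (mech1 n d (misreport n S x x')).1 (mech1 n d (misreport n S x x')).2 <
          cost (x j) (mech1 n d x).1 (mech1 n d x).2) :=
  stmt4_general n hn d hd
end
end

section
/- Mechanism 2 is strongly group strategyproof: there do not exist a location profile x ∈ ℝⁿ, a nonempty set of agents S ⊆ {1,…,n}, and a misreport x'_S ∈ ℝ^{|S|} such that c(xᵢ, f₂(x'_S, x₋_S)) ≤ c(xᵢ, f₂(x)) for all i ∈ S and c(xⱼ, f₂(x'_S, x₋_S)) < c(xⱼ, f₂(x)) for some j ∈ S, where f₂ denotes Mechanism 2. -/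
open MeasureTheory

noncomputable section

lemma cost_eq_max {t a b : ℝ} (ha : a ≤ 0) (hb : 0 ≤ b) :
    cost t a b = max 0 (max (a - t) (t - b)) := by
  rw [cost, shrink_zero ha hb, shrink]
  split_ifs with hta htb
  · rw [abs_of_nonpos (by linarith), max_eq_left (by linarith : t - b ≤ a - t),
      max_eq_right (by linarith : (0 : ℝ) ≤ a - t)]
    ring
  · rw [sub_self, abs_zero, eq_comm, max_eq_left]
    exact max_le (by linarith) (by linarith)
  · rw [abs_of_nonneg (by linarith), max_eq_right (by linarith : a - t ≤ t - b),
      max_eq_right (by linarith : (0 : ℝ) ≤ t - b)]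
    ring

lemma cost_le_of_range_shift_left {t m m' d : ℝ} (hm'm : m' ≤ m) (hm : m ≤ 0)
    (hm' : 0 ≤ m' + d) (hmt : m ≤ t) : cost t m (m + d) ≤ cost t m' (m' + d) := by
  rw [cost_eq_max hm (by linarith), cost_eq_max (by linarith) hm']
  refine max_le (le_max_left _ _) (max_le ?_ ?_)
  · exact (by linarith : m - t ≤ 0).trans (le_max_left _ _)
  · exact (by linarith : t - (m + d) ≤ t - (m' + d)).trans
      ((le_max_right _ _).trans (le_max_right _ _))

lemma cost_lt_of_range_shift_right {t m m' d : ℝ} (hmm' : m < m') (hm' : m' ≤ 0)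
    (hm : 0 ≤ m + d) (htm : t ≤ m) : cost t m (m + d) < cost t m' (m' + d) := by
  rw [cost_eq_max (by linarith) hm, cost_eq_max hm' (by linarith),
    max_eq_left (by linarith : t - (m + d) ≤ m - t), max_eq_right (by linarith : 0 ≤ m - t)]
  exact lt_of_lt_of_le (by linarith) (le_trans (le_max_left _ _) (le_max_right _ _))

lemma xleft_le {n : ℕ} (x : Fin n → ℝ) (i : Fin n) : xleft n x ≤ x i :=
  csInf_le (Set.finite_range x).bddBelow ⟨i, rfl⟩

lemma exists_eq_xleft {n : ℕ} [Nonempty (Fin n)] (x : Fin n → ℝ) : ∃ i, x i = xleft n x :=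
  (Set.range_nonempty x).csInf_mem (Set.finite_range x)

section mech2

variable {n : ℕ} {d : ℝ}

lemma mech2_snd (x : Fin n → ℝ) : (mech2 n d x).2 = (mech2 n d x).1 + d := by
  unfold mech2
  split_ifs <;> simp

lemma neg_le_mech2_fst (hd : 0 ≤ d) (x : Fin n → ℝ) : -d ≤ (mech2 n d x).1 := by
  unfold mech2
  split_ifs <;> dsimp only <;> linarith

lemma mech2_fst_nonpos (hd : 0 ≤ d) (x : Fin n → ℝ) : (mech2 n d x).1 ≤ 0 := by
  unfold mech2
  split_ifs <;> dsimp only <;> linarith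

lemma mech2_fst_le_xleft {x : Fin n → ℝ} (h : -d < (mech2 n d x).1) :
    (mech2 n d x).1 ≤ xleft n x := by
  unfold mech2 at *
  split_ifs at * <;> dsimp only at * <;> linarith

lemma xleft_le_mech2_fst {x : Fin n → ℝ} (h : (mech2 n d x).1 < 0) :
    xleft n x ≤ (mech2 n d x).1 := by
  unfold mech2 at *
  split_ifs at * <;> dsimp only at * <;> linarith

lemma mech2_fst_mono (hd : 0 ≤ d) {x y : Fin n → ℝ} (h : xleft n x ≤ xleft n y) :
    (mech2 n d x).1 ≤ (mech2 n d y).1 := by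
  unfold mech2
  split_ifs <;> dsimp only <;> linarith

end mech2

theorem stmt5 (n : ℕ) (hn : 1 ≤ n) (d : ℝ) (hd : 0 < d) :
    ¬ ∃ (x : Fin n → ℝ) (S : Finset (Fin n)) (x' : Fin n → ℝ), S.Nonempty ∧
      (∀ i ∈ S,
        cost (x i) (mech2 n d (misreport n S x x')).1 (mech2 n d (misreport n S x x')).2 ≤
          cost (x i) (mech2 n d x).1 (mech2 n d x).2) ∧
      (∃ j ∈ S,
        cost (x j) (mech2 n d (misreport n S x x')).1 (mech2 n d (misreport n S x x')).2 <
          cost (x j) (mech2 n d x).1 (mech2 n d x).2) := by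
  rintro ⟨x, S, x', -, hle, j, -, hlt⟩
  have : Nonempty (Fin n) := ⟨⟨0, hn⟩⟩
  set y := misreport n S x x'
  simp only [mech2_snd] at hle hlt
  have hy := neg_le_mech2_fst hd.le y
  have hx := mech2_fst_nonpos hd.le x
  rcases lt_trichotomy (mech2 n d y).1 (mech2 n d x).1 with hyx | hyx | hxy
  · have hmj := (mech2_fst_le_xleft (hy.trans_lt hyx)).trans (xleft_le x j)
    exact (cost_le_of_range_shift_left hyx.le hx (by linarith) hmj).not_gt hlt
  · exact (hyx ▸ hlt).false
  · obtain ⟨i, hi⟩ := exists_eq_xleft x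
    have hiS : i ∈ S := by
      by_contra hiS
      have hyi : y i = x i := if_neg hiS
      exact (mech2_fst_mono hd.le ((xleft_le y i).trans (hyi.trans hi).le)).not_gt hxy
    have hxm := xleft_le_mech2_fst (hxy.trans_le (mech2_fst_nonpos hd.le y))
    exact (cost_lt_of_range_shift_right hxy (mech2_fst_nonpos hd.le y)
      (by linarith [neg_le_mech2_fst hd.le x]) (hi.trans_le hxm)).not_ge (hle i hiS)
end
end

section
/- Mechanism 2 is an (n−1)-approximation for the social cost: for every n ≥ 2 and every location profile x ∈ ℝⁿ, SC(x, f₂(x)) ≤ (n − 1) · SC(x, a, b) for every feasible range (a,b), where f₂ denotes Mechanism 2. -/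
open MeasureTheory

noncomputable section

lemma cost_nonneg' (t a b : ℝ) : 0 ≤ cost t a b := abs_nonneg _

lemma costD3 {t a b : ℝ} (hab : a ≤ b) (ht : 0 ≤ t) :
    t - (max b 0 - max a 0) ≤ cost t a b := by
  unfold cost shrink
  rcases le_total a 0 with ha | ha <;> rcases le_total b 0 with hb | hb <;>
    [rw [max_eq_right ha, max_eq_right hb];
     rw [max_eq_right ha, max_eq_left hb];
     rw [max_eq_left ha, max_eq_right hb];
     rw [max_eq_left ha, max_eq_left hb]] <;>
  split_ifs <;>
  (first
    | exact le_trans (by linarith) (le_abs_self _)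
    | exact le_trans (by linarith) (neg_le_abs _)
    | linarith)

lemma costD4 {t a b : ℝ} (hab : a ≤ b) (ht : t ≤ 0) :
    -t - (b - a) + (max b 0 - max a 0) ≤ cost t a b := by
  unfold cost shrink
  rcases le_total a 0 with ha | ha <;> rcases le_total b 0 with hb | hb <;>
    [rw [max_eq_right ha, max_eq_right hb];
     rw [max_eq_right ha, max_eq_left hb];
     rw [max_eq_left ha, max_eq_right hb];
     rw [max_eq_left ha, max_eq_left hb]] <;>
  split_ifs <;>
  (first
    | exact le_trans (by linarith) (le_abs_self _)
    | exact le_trans (by linarith) (neg_le_abs _))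

lemma costC1 {t d : ℝ} (ht : 0 ≤ t) (hd : 0 ≤ d) : cost t 0 d ≤ max (t - d) 0 := by
  unfold cost shrink
  split_ifs <;>
    (first
      | (apply le_max_of_le_left; apply abs_le.mpr; constructor <;> linarith)
      | (apply le_max_of_le_right; apply abs_le.mpr; constructor <;> linarith))

lemma costC2 {t d : ℝ} (ht : t ≤ 0) (hd : 0 < d) : cost t (-d) 0 ≤ max (-t - d) 0 := by
  unfold cost shrink
  split_ifs <;>
    (first
      | (apply le_max_of_le_left; apply abs_le.mpr; constructor <;> linarith)
      | (apply le_max_of_le_right; apply abs_le.mpr; constructor <;> linarith))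

lemma costC3 {t d : ℝ} (ht : 0 < t) (hd : 0 < d) : cost t (-d) 0 ≤ t := by
  unfold cost shrink
  split_ifs <;> (apply abs_le.mpr; constructor <;> linarith)

lemma costC4 {t u d : ℝ} (hut : u ≤ t) (hu : u ≤ 0) (hud : 0 ≤ u + d) :
    cost t u (u + d) ≤ max (t - u - d) 0 := by
  unfold cost shrink
  split_ifs <;>
    (first
      | (apply le_max_of_le_left; apply abs_le.mpr; constructor <;> linarith)
      | (apply le_max_of_le_right; apply abs_le.mpr; constructor <;> linarith))

lemma Prange {a b : ℝ} (hab : a ≤ b) :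
    0 ≤ max b 0 - max a 0 ∧ max b 0 - max a 0 ≤ b - a := by
  constructor <;>
    (rcases le_total a 0 with ha | ha <;> rcases le_total b 0 with hb | hb <;>
      [rw [max_eq_right ha, max_eq_right hb];
       rw [max_eq_right ha, max_eq_left hb];
       rw [max_eq_left ha, max_eq_right hb];
       rw [max_eq_left ha, max_eq_left hb]] <;> linarith)

lemma sum_bound {n : ℕ} (hn : 2 ≤ n) (c cm : Fin n → ℝ) (l : Fin n) (Q : ℝ)
    (hc : ∀ i, 0 ≤ c i) (hQ : Q ≤ c l)
    (hl : cm l ≤ c l - Q) (hi : ∀ i, cm i ≤ c i + Q) :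
    ∑ i, cm i ≤ ((n : ℝ) - 1) * ∑ i, c i := by
  have h2 : ∑ i ∈ Finset.univ.erase l, cm i ≤
      ∑ i ∈ Finset.univ.erase l, (c i + Q) :=
    Finset.sum_le_sum fun i _ => hi i
  rw [Finset.sum_add_distrib, Finset.sum_const, Finset.card_erase_of_mem (Finset.mem_univ l),
    Finset.card_univ, Fintype.card_fin, nsmul_eq_mul] at h2
  have hcast : ((n - 1 : ℕ) : ℝ) = (n : ℝ) - 1 := by
    rw [Nat.cast_sub (by omega)]; simp
  rw [hcast] at h2
  have e1 : ∑ i, cm i = cm l + ∑ i ∈ Finset.univ.erase l, cm i :=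
    (Finset.add_sum_erase _ _ (Finset.mem_univ l)).symm
  have e2 : ∑ i, c i = c l + ∑ i ∈ Finset.univ.erase l, c i :=
    (Finset.add_sum_erase _ _ (Finset.mem_univ l)).symm
  have hcl : c l ≤ ∑ i, c i := Finset.single_le_sum (fun i _ => hc i) (Finset.mem_univ l)
  have hn' : (2 : ℝ) ≤ (n : ℝ) := by exact_mod_cast hn
  have hS : 0 ≤ ∑ i ∈ Finset.univ.erase l, c i :=
    Finset.sum_nonneg fun i _ => hc i
  nlinarith [hS, hcl, hQ, hn', hl]

theorem stmt6 (n : ℕ) (hn : 2 ≤ n) (d : ℝ) (hd : 0 < d) (x : Fin n → ℝ)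
    (a b : ℝ) (hab : a ≤ b) (hba : b - a ≤ d) :
    SC n x (mech2 n d x).1 (mech2 n d x).2 ≤ ((n : ℝ) - 1) * SC n x a b := by
  have hne : Nonempty (Fin n) := ⟨⟨0, by omega⟩⟩
  have hmem : xleft n x ∈ Set.range x :=
    (Set.range_nonempty x).csInf_mem (Set.finite_range x)
  obtain ⟨l, hlx⟩ := hmem
  have hlb : ∀ i, xleft n x ≤ x i := fun i =>
    csInf_le (Set.finite_range x).bddBelow ⟨i, rfl⟩
  obtain ⟨hP0, hPd⟩ := Prange hab
  set P : ℝ := max b 0 - max a 0 with hP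
  unfold mech2
  split_ifs with h1 h2
  · -- x_l ≥ 0 : range (0, d)
    show SC n x 0 d ≤ _
    unfold SC
    refine sum_bound hn _ _ l 0 (fun i => cost_nonneg' _ _ _) (cost_nonneg' _ _ _) ?_ ?_
    · have h0 : 0 ≤ x l := le_trans h1 (hlb l)
      have := costC1 h0 hd.le
      have := costD3 hab h0
      have := cost_nonneg' (x l) a b
      have := max_le (by linarith : x l - d ≤ cost (x l) a b) (cost_nonneg' (x l) a b)
      linarith
    · intro i
      have h0 : 0 ≤ x i := le_trans h1 (hlb i)
      have := costC1 (t := x i) h0 hd.le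
      have := costD3 (t := x i) hab h0
      have := cost_nonneg' (x i) a b
      have := max_le (by linarith : x i - d ≤ cost (x i) a b) (cost_nonneg' (x i) a b)
      linarith
  · -- x_l ≤ -d : range (-d, 0)
    show SC n x (-d) 0 ≤ _
    unfold SC
    have hxl : x l ≤ -d := by rw [hlx]; exact h2
    have hDl := costD4 (t := x l) hab (by linarith)
    refine sum_bound hn _ _ l P (fun i => cost_nonneg' _ _ _) (by linarith) ?_ ?_
    · have := costC2 (t := x l) (by linarith) hd
      have hm : max (-(x l) - d) 0 = -(x l) - d := max_eq_left (by linarith)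
      rw [hm] at this
      linarith
    · intro i
      rcases le_or_gt (x i) 0 with hi0 | hi0
      · have := costC2 (t := x i) hi0 hd
        have hD := costD4 (t := x i) hab hi0
        have := cost_nonneg' (x i) a b
        have := max_le (by linarith : -(x i) - d ≤ cost (x i) a b + P)
          (by linarith : (0:ℝ) ≤ cost (x i) a b + P)
        linarith
      · have := costC3 (t := x i) hi0 hd
        have hD := costD3 (t := x i) hab hi0.le
        linarith
  · -- -d < x_l < 0 : range (x_l, x_l + d)
    show SC n x (xleft n x) (xleft n x + d) ≤ _
    rw [← hlx]
    unfold SC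
    push_neg at h1 h2
    have hxl0 : x l ≤ 0 := by rw [hlx]; exact h1.le
    have hxld : 0 ≤ x l + d := by rw [hlx]; linarith [h2]
    have hDl := costD4 (t := x l) hab hxl0
    refine sum_bound hn _ _ l (cost (x l) a b) (fun i => cost_nonneg' _ _ _) le_rfl ?_ ?_
    · have := costC4 (t := x l) (u := x l) le_rfl hxl0 hxld
      have hm : max (x l - x l - d) 0 = 0 := max_eq_right (by linarith)
      rw [hm] at this
      linarith
    · intro i
      have hli : x l ≤ x i := by rw [hlx]; exact hlb i
      have := costC4 (t := x i) (u := x l) hli hxl0 hxld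
      have hRpos : (0:ℝ) ≤ cost (x i) a b + cost (x l) a b := by
        have := cost_nonneg' (x i) a b; have := cost_nonneg' (x l) a b; linarith
      rcases le_or_gt (x i) 0 with hi0 | hi0
      · have hm : x i - x l - d ≤ 0 := by
          have : -(x l) < d := by rw [hlx]; linarith [h2]
          linarith
        have := max_le (le_trans hm hRpos) hRpos
        linarith
      · have hD := costD3 (t := x i) hab hi0.le
        have := max_le (by linarith : x i - x l - d ≤ cost (x i) a b + cost (x l) a b) hRpos
        linarith
end
end

section
/- The approximation analysis of Mechanism 2 for the social cost is tight: for every n ≥ 2 and d > 0, the profile x with x₁ = −d and x₂ = ⋯ = xₙ = d satisfies SC(x, f₂(x)) = (n − 1) · d, while the feasible range (0, d) achieves SC(x, 0, d) = d and minimizes the social cost over all feasible ranges; hence SC(x, f₂(x)) = (n − 1) · OPT_SC(x), where f₂ denotes Mechanism 2. -/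
open MeasureTheory

noncomputable section

theorem stmt7 (n : ℕ) (hn : 2 ≤ n) (d : ℝ) (hd : 0 < d)
    (x : Fin n → ℝ)
    (hx1 : x ⟨0, by omega⟩ = -d)
    (hx2 : ∀ i : Fin n, i.val ≠ 0 → x i = d) :
    SC n x (mech2 n d x).1 (mech2 n d x).2 = ((n : ℝ) - 1) * d ∧
    SC n x 0 d = d ∧
    (∀ a b : ℝ, a ≤ b → b - a ≤ d → SC n x 0 d ≤ SC n x a b) ∧
    SC n x (mech2 n d x).1 (mech2 n d x).2 = ((n : ℝ) - 1) * OPTSC n d x := by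
  have i0 : Fin n := ⟨0, by omega⟩
  have hxl : xleft n x = -d := by
    unfold xleft
    apply le_antisymm
    · exact csInf_le (Set.finite_range x).bddBelow ⟨⟨0, by omega⟩, hx1⟩
    · haveI : Nonempty (Fin n) := ⟨⟨0, by omega⟩⟩
      apply le_csInf (Set.range_nonempty x)
      rintro y ⟨i, rfl⟩
      by_cases h : i.val = 0
      · rw [show i = (⟨0, by omega⟩ : Fin n) from Fin.ext h, hx1]
      · rw [hx2 i h]; linarith
  have hm : mech2 n d x = (-d, 0) := by
    unfold mech2
    rw [hxl, if_neg (by linarith), if_pos le_rfl]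
  -- general SC formula
  have hSC : ∀ a b : ℝ, SC n x a b = cost (-d) a b + ((n:ℝ)-1) * cost d a b := by
    intro a b
    unfold SC
    have h0 : ∀ i : Fin n, cost (x i) a b
        = if i = (⟨0, by omega⟩ : Fin n) then cost (-d) a b else cost d a b := by
      intro i
      by_cases h : i = (⟨0, by omega⟩ : Fin n)
      · rw [if_pos h, h, hx1]
      · rw [if_neg h, hx2 i (by simpa [Fin.ext_iff] using h)]
    simp_rw [h0]
    rw [← Finset.add_sum_erase Finset.univ _ (Finset.mem_univ (⟨0, by omega⟩ : Fin n)),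
      if_pos rfl]
    congr 1
    rw [Finset.sum_congr rfl (fun i hi => if_neg (Finset.ne_of_mem_erase hi)),
      Finset.sum_const, Finset.card_erase_of_mem (Finset.mem_univ _),
      Finset.card_univ, Fintype.card_fin, nsmul_eq_mul]
    have : ((n - 1 : ℕ) : ℝ) = (n : ℝ) - 1 := by
      push_cast [Nat.cast_sub (by omega : 1 ≤ n)]; ring
    rw [this]
  have c1 : cost (-d) (-d) 0 = 0 := by
    unfold cost shrink
    rw [if_pos (le_refl (-d)), if_neg (show ¬(0:ℝ) ≤ -d by linarith), if_pos (le_refl (0:ℝ))]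
    simp
  have c2 : cost d (-d) 0 = d := by
    unfold cost shrink
    rw [if_neg (show ¬ d ≤ -d by linarith), if_neg (show ¬ d ≤ (0:ℝ) by linarith),
      if_neg (show ¬(0:ℝ) ≤ -d by linarith), if_pos (le_refl (0:ℝ))]
    rw [show d - (0 - -d) - -d = d by ring, abs_of_nonneg hd.le]
  have c3 : cost (-d) 0 d = d := by
    unfold cost shrink
    rw [if_pos (show -d ≤ (0:ℝ) by linarith), if_pos (le_refl (0:ℝ))]
    rw [show -d - 0 = -d by ring, abs_neg, abs_of_nonneg hd.le]
  have c4 : cost d 0 d = 0 := by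
    unfold cost shrink
    rw [if_neg (show ¬ d ≤ (0:ℝ) by linarith), if_pos (le_refl d), if_pos (le_refl (0:ℝ))]
    simp
  have hgoal1 : SC n x (mech2 n d x).1 (mech2 n d x).2 = ((n : ℝ) - 1) * d := by
    rw [hm]; simp only []
    rw [hSC, c1, c2]; ring
  have hgoal2 : SC n x 0 d = d := by
    rw [hSC, c3, c4]; ring
  have hlb : ∀ a b : ℝ, a ≤ b → b - a ≤ d → d ≤ SC n x a b := by
    intro a b hab hba
    have hs_le : ∀ t : ℝ, shrink a b t ≤ t := by
      intro t; unfold shrink; split_ifs <;> linarith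
    have hs_ge : ∀ t : ℝ, t - (b - a) ≤ shrink a b t := by
      intro t; unfold shrink; split_ifs <;> linarith
    have key : d ≤ cost (-d) a b + cost d a b := by
      have h1 := hs_le (-d)
      have h2 := hs_ge d
      have h3 : shrink a b d - shrink a b (-d) ≥ d := by linarith
      have h4 : shrink a b d - shrink a b (-d)
          ≤ |shrink a b (-d) - shrink a b 0| + |shrink a b d - shrink a b 0| := by
        have := abs_sub_abs_le_abs_sub (shrink a b d - shrink a b 0)
          (shrink a b (-d) - shrink a b 0)
        have h5 : shrink a b d - shrink a b (-d)
            ≤ |(shrink a b d - shrink a b 0) - (shrink a b (-d) - shrink a b 0)| := by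
          have := le_abs_self ((shrink a b d - shrink a b 0) - (shrink a b (-d) - shrink a b 0))
          linarith [this]
        calc shrink a b d - shrink a b (-d)
            ≤ |(shrink a b d - shrink a b 0) - (shrink a b (-d) - shrink a b 0)| := h5
          _ ≤ |shrink a b d - shrink a b 0| + |shrink a b (-d) - shrink a b 0| :=
              abs_sub (shrink a b d - shrink a b 0) (shrink a b (-d) - shrink a b 0)
          _ = |shrink a b (-d) - shrink a b 0| + |shrink a b d - shrink a b 0| := by ring
      unfold cost
      linarith
    rw [hSC]
    have hc2 : 0 ≤ cost d a b := abs_nonneg _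
    have hn1 : (1:ℝ) ≤ (n:ℝ) - 1 := by
      have : (2:ℝ) ≤ (n:ℝ) := by exact_mod_cast hn
      linarith
    nlinarith [abs_nonneg (shrink a b (-d) - shrink a b 0)]
  have hopt : OPTSC n d x = d := by
    unfold OPTSC
    apply le_antisymm
    · apply csInf_le
      · refine ⟨0, ?_⟩
        rintro v ⟨a, b, hab, hba, rfl⟩
        exact Finset.sum_nonneg fun i _ => abs_nonneg _
      · exact ⟨0, d, by linarith, by linarith, hgoal2.symm⟩
    · have hne : (d : ℝ) ∈ {v : ℝ | ∃ a b : ℝ, a ≤ b ∧ b - a ≤ d ∧ v = SC n x a b} :=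
        ⟨0, d, by linarith, by linarith, hgoal2.symm⟩
      apply le_csInf ⟨d, hne⟩
      rintro v ⟨a, b, hab, hba, rfl⟩
      exact hlb a b hab hba
  refine ⟨hgoal1, hgoal2, ?_, ?_⟩
  · intro a b hab hba
    rw [hgoal2]; exact hlb a b hab hba
  · rw [hgoal1, hopt]
end
end

section
/- Characterization of the optimal maximum cost: let x ∈ ℝⁿ (n ≥ 1) with x_l = minᵢ xᵢ and x_r = maxᵢ xᵢ. Then OPT_MC(x) = max(0, x_r − d) if x_l ≥ 0; OPT_MC(x) = max(0, −x_l − d) if x_r ≤ 0; and if x_l < 0 < x_r, then OPT_MC(x) = x_r − d when x_l + x_r > d, OPT_MC(x) = −x_l − d when x_l + x_r < −d, and OPT_MC(x) = max(0, (x_r − x_l − d)/2) when −d ≤ x_l + x_r ≤ d. -/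
open MeasureTheory

noncomputable section

lemma shrink_mono {a b : ℝ} (hab : a ≤ b) : Monotone (shrink a b) := by
  intro s t hst
  simp only [shrink]
  split_ifs <;> linarith

lemma shrink_le {a b : ℝ} (hab : a ≤ b) (t : ℝ) : shrink a b t ≤ t := by
  simp only [shrink]; split_ifs <;> linarith

lemma le_shrink {a b : ℝ} (hab : a ≤ b) (t : ℝ) : t - (b - a) ≤ shrink a b t := by
  simp only [shrink]; split_ifs <;> linarith

lemma cost_of_nonneg {a b : ℝ} (hab : a ≤ b) {t : ℝ} (ht : 0 ≤ t) :
    cost t a b = shrink a b t - shrink a b 0 :=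
  abs_of_nonneg (sub_nonneg.2 (shrink_mono hab ht))

lemma cost_of_nonpos {a b : ℝ} (hab : a ≤ b) {t : ℝ} (ht : t ≤ 0) :
    cost t a b = shrink a b 0 - shrink a b t := by
  rw [cost, abs_sub_comm]
  exact abs_of_nonneg (sub_nonneg.2 (shrink_mono hab ht))

lemma cost_formula_s9 {a b : ℝ} (ha : a ≤ 0) (hb : 0 ≤ b) (t : ℝ) :
    cost t a b = if t ≤ a then a - t else if t ≤ b then 0 else t - b := by
  have h0 : shrink a b 0 = a := by simp only [shrink]; split_ifs <;> linarith
  rw [cost, h0]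
  simp only [shrink]
  split_ifs with h1 h2
  · rw [abs_of_nonpos (by linarith)]; ring
  · simp
  · rw [show t - (b - a) - a = t - b by ring, abs_of_nonneg (by linarith)]

lemma le_MC {n : ℕ} (x : Fin n → ℝ) (a b : ℝ) (i : Fin n) :
    cost (x i) a b ≤ MC n x a b :=
  le_csSup (Set.finite_range _).bddAbove ⟨i, rfl⟩

lemma exists_xleft {n : ℕ} (hn : 1 ≤ n) (x : Fin n → ℝ) : ∃ i, x i = xleft n x := by
  haveI : Nonempty (Fin n) := ⟨⟨0, hn⟩⟩
  exact (Set.range_nonempty x).csInf_mem (Set.finite_range x)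

lemma exists_xright {n : ℕ} (hn : 1 ≤ n) (x : Fin n → ℝ) : ∃ i, x i = xright n x := by
  haveI : Nonempty (Fin n) := ⟨⟨0, hn⟩⟩
  exact (Set.range_nonempty x).csSup_mem (Set.finite_range x)

lemma le_xright {n : ℕ} (x : Fin n → ℝ) (i : Fin n) : x i ≤ xright n x :=
  le_csSup (Set.finite_range x).bddAbove ⟨i, rfl⟩

lemma MC_nonneg {n : ℕ} (hn : 1 ≤ n) (x : Fin n → ℝ) (a b : ℝ) :
    0 ≤ MC n x a b :=
  le_trans (abs_nonneg _) (le_MC x a b ⟨0, hn⟩)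

lemma MC_eq {n : ℕ} (hn : 1 ≤ n) (x : Fin n → ℝ) {a b : ℝ} (hab : a ≤ b) :
    MC n x a b = max (cost (xleft n x) a b) (cost (xright n x) a b) := by
  haveI : Nonempty (Fin n) := ⟨⟨0, hn⟩⟩
  apply le_antisymm
  · apply csSup_le (Set.range_nonempty _)
    rintro v ⟨i, rfl⟩
    show cost (x i) a b ≤ _
    rcases le_total (x i) 0 with h | h
    · refine le_trans ?_ (le_max_left _ _)
      rw [cost_of_nonpos hab h, cost_of_nonpos hab (le_trans (xleft_le x i) h)]
      have := shrink_mono hab (xleft_le x i)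
      linarith
    · refine le_trans ?_ (le_max_right _ _)
      rw [cost_of_nonneg hab h, cost_of_nonneg hab (le_trans h (le_xright x i))]
      have := shrink_mono hab (le_xright x i)
      linarith
  · obtain ⟨i, hi⟩ := exists_xleft hn x
    obtain ⟨j, hj⟩ := exists_xright hn x
    exact max_le (hi ▸ le_MC x a b i) (hj ▸ le_MC x a b j)

lemma MC_lb_right {n : ℕ} (hn : 1 ≤ n) (x : Fin n → ℝ) {a b d : ℝ} (hab : a ≤ b)
    (hbd : b - a ≤ d) (hr : 0 ≤ xright n x) : xright n x - d ≤ MC n x a b := by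
  obtain ⟨j, hj⟩ := exists_xright hn x
  refine le_trans ?_ (hj ▸ le_MC x a b j)
  rw [cost_of_nonneg hab hr]
  have h1 := le_shrink hab (xright n x)
  have h2 := shrink_le hab 0
  linarith

lemma MC_lb_left {n : ℕ} (hn : 1 ≤ n) (x : Fin n → ℝ) {a b d : ℝ} (hab : a ≤ b)
    (hbd : b - a ≤ d) (hl : xleft n x ≤ 0) : -(xleft n x) - d ≤ MC n x a b := by
  obtain ⟨i, hi⟩ := exists_xleft hn x
  refine le_trans ?_ (hi ▸ le_MC x a b i)
  rw [cost_of_nonpos hab hl]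
  have h1 := shrink_le hab (xleft n x)
  have h2 := le_shrink hab 0
  linarith

lemma MC_lb_mid {n : ℕ} (hn : 1 ≤ n) (x : Fin n → ℝ) {a b d : ℝ} (hab : a ≤ b)
    (hbd : b - a ≤ d) (hl : xleft n x ≤ 0) (hr : 0 ≤ xright n x) :
    (xright n x - xleft n x - d) / 2 ≤ MC n x a b := by
  obtain ⟨i, hi⟩ := exists_xleft hn x
  obtain ⟨j, hj⟩ := exists_xright hn x
  have c1 := hi ▸ le_MC x a b i
  have c2 := hj ▸ le_MC x a b j
  rw [cost_of_nonpos hab hl] at c1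
  rw [cost_of_nonneg hab hr] at c2
  have h1 := shrink_le hab (xleft n x)
  have h2 := le_shrink hab (xright n x)
  linarith

lemma OPTMC_le {n : ℕ} (hn : 1 ≤ n) {d : ℝ} (x : Fin n → ℝ) {a b : ℝ}
    (hab : a ≤ b) (hbd : b - a ≤ d) : OPTMC n d x ≤ MC n x a b := by
  apply csInf_le
  · refine ⟨0, ?_⟩
    rintro v ⟨a', b', _, _, rfl⟩
    exact MC_nonneg hn x a' b'
  · exact ⟨a, b, hab, hbd, rfl⟩

lemma le_OPTMC {n : ℕ} (hn : 1 ≤ n) {d : ℝ} (hd : 0 < d) (x : Fin n → ℝ) (V : ℝ)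
    (h : ∀ a b : ℝ, a ≤ b → b - a ≤ d → V ≤ MC n x a b) : V ≤ OPTMC n d x := by
  have hne : {v : ℝ | ∃ a b : ℝ, a ≤ b ∧ b - a ≤ d ∧ v = MC n x a b}.Nonempty :=
    ⟨MC n x 0 d, 0, d, le_of_lt hd, by linarith, rfl⟩
  apply le_csInf hne
  rintro v ⟨a, b, hab, hbd, rfl⟩
  exact h a b hab hbd


theorem stmt9 (n : ℕ) (hn : 1 ≤ n) (d : ℝ) (hd : 0 < d) (x : Fin n → ℝ) :
    (0 ≤ xleft n x → OPTMC n d x = max 0 (xright n x - d)) ∧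
    (xright n x ≤ 0 → OPTMC n d x = max 0 (-(xleft n x) - d)) ∧
    (xleft n x < 0 → 0 < xright n x →
      (d < xleft n x + xright n x → OPTMC n d x = xright n x - d) ∧
      (xleft n x + xright n x < -d → OPTMC n d x = -(xleft n x) - d) ∧
      (-d ≤ xleft n x + xright n x → xleft n x + xright n x ≤ d →
        OPTMC n d x = max 0 ((xright n x - xleft n x - d) / 2))) := by
  set l := xleft n x with hldef
  set r := xright n x with hrdef
  have hlr : l ≤ r := le_trans (xleft_le x ⟨0, hn⟩) (le_xright x ⟨0, hn⟩)
  refine ⟨?_, ?_, ?_⟩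
  · -- Case 1 : 0 ≤ l
    intro h0l
    apply le_antisymm
    · have hcl : cost l 0 d ≤ max 0 (r - d) := by
        rw [cost_formula_s9 le_rfl hd.le]
        split_ifs <;>
          first
          | exact le_max_left _ _
          | exact le_max_of_le_right (by linarith)
          | exact le_max_of_le_left (by linarith)
      have hcr : cost r 0 d ≤ max 0 (r - d) := by
        rw [cost_formula_s9 le_rfl hd.le]
        split_ifs <;>
          first
          | exact le_max_left _ _
          | exact le_max_of_le_right (by linarith)
          | exact le_max_of_le_left (by linarith)
      have key : MC n x 0 d ≤ max 0 (r - d) := by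
        rw [MC_eq hn x hd.le]; exact max_le hcl hcr
      exact le_trans (OPTMC_le hn x hd.le (by linarith)) key
    · apply le_OPTMC hn hd
      intro a b hab hbd
      exact max_le (MC_nonneg hn x a b) (MC_lb_right hn x hab hbd (by linarith))
  · -- Case 2 : r ≤ 0
    intro hr0
    apply le_antisymm
    · have hab : (-d : ℝ) ≤ 0 := by linarith
      have hcl : cost l (-d) 0 ≤ max 0 (-l - d) := by
        rw [cost_formula_s9 hab le_rfl]
        split_ifs <;>
          first
          | exact le_max_left _ _
          | exact le_max_of_le_right (by linarith)
          | exact le_max_of_le_left (by linarith)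
      have hcr : cost r (-d) 0 ≤ max 0 (-l - d) := by
        rw [cost_formula_s9 hab le_rfl]
        split_ifs <;>
          first
          | exact le_max_left _ _
          | exact le_max_of_le_right (by linarith)
          | exact le_max_of_le_left (by linarith)
      have key : MC n x (-d) 0 ≤ max 0 (-l - d) := by
        rw [MC_eq hn x hab]; exact max_le hcl hcr
      exact le_trans (OPTMC_le hn x hab (by linarith)) key
    · apply le_OPTMC hn hd
      intro a b hab hbd
      exact max_le (MC_nonneg hn x a b) (MC_lb_left hn x hab hbd (by linarith))
  · -- Case 3 : l < 0 < r
    intro hl0 hr0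
    refine ⟨?_, ?_, ?_⟩
    · -- 3a : d < l + r
      intro hsum
      apply le_antisymm
      · have hcl : cost l 0 d ≤ r - d := by
          rw [cost_formula_s9 le_rfl hd.le]
          split_ifs with h1 h2 <;> linarith
        have hcr : cost r 0 d ≤ r - d := by
          rw [cost_formula_s9 le_rfl hd.le]
          split_ifs with h1 h2 <;> linarith
        have key : MC n x 0 d ≤ r - d := by
          rw [MC_eq hn x hd.le]; exact max_le hcl hcr
        exact le_trans (OPTMC_le hn x hd.le (by linarith)) key
      · exact le_OPTMC hn hd x _ fun a b hab hbd =>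
          MC_lb_right hn x hab hbd (by linarith)
    · -- 3b : l + r < -d
      intro hsum
      apply le_antisymm
      · have hab : (-d : ℝ) ≤ 0 := by linarith
        have hcl : cost l (-d) 0 ≤ -l - d := by
          rw [cost_formula_s9 hab le_rfl]
          split_ifs with h1 h2 <;> linarith
        have hcr : cost r (-d) 0 ≤ -l - d := by
          rw [cost_formula_s9 hab le_rfl]
          split_ifs with h1 h2 <;> linarith
        have key : MC n x (-d) 0 ≤ -l - d := by
          rw [MC_eq hn x hab]; exact max_le hcl hcr
        exact le_trans (OPTMC_le hn x hab (by linarith)) key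
      · exact le_OPTMC hn hd x _ fun a b hab hbd =>
          MC_lb_left hn x hab hbd (by linarith)
    · -- 3c : -d ≤ l + r ≤ d
      intro hs1 hs2
      set a := (l + r - d) / 2 with hadef
      set b := (l + r + d) / 2 with hbdef
      have hab : a ≤ b := by rw [hadef, hbdef]; linarith
      have ha0 : a ≤ 0 := by rw [hadef]; linarith
      have hb0 : (0 : ℝ) ≤ b := by rw [hbdef]; linarith
      have hbd : b - a ≤ d := by rw [hadef, hbdef]; linarith
      apply le_antisymm
      · have hcl : cost l a b ≤ max 0 ((r - l - d) / 2) := by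
          rw [cost_formula_s9 ha0 hb0]
          split_ifs with h1 h2
          · refine le_max_of_le_right ?_
            rw [hadef] at h1 ⊢; linarith
          · exact le_max_left _ _
          · refine le_max_of_le_left ?_; linarith
        have hcr : cost r a b ≤ max 0 ((r - l - d) / 2) := by
          rw [cost_formula_s9 ha0 hb0]
          split_ifs with h1 h2
          · refine le_max_of_le_left ?_
            rw [hadef] at h1 ⊢; linarith
          · exact le_max_left _ _
          · refine le_max_of_le_right ?_
            rw [hbdef] at h2 ⊢; linarith
        have key : MC n x a b ≤ max 0 ((r - l - d) / 2) := by
          rw [MC_eq hn x hab]; exact max_le hcl hcr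
        exact le_trans (OPTMC_le hn x hab hbd) key
      · apply le_OPTMC hn hd
        intro a' b' hab' hbd'
        exact max_le (MC_nonneg hn x a' b')
          (MC_lb_mid hn x hab' hbd' (by linarith) (by linarith))
end
end

section
/- No deterministic strategyproof mechanism always outputs an optimal range for the maximum cost: for every n ≥ 2 and d > 0, there is no deterministic mechanism f that always outputs a feasible range, is strategyproof, and satisfies MC(x, f(x)) = OPT_MC(x) for every location profile x ∈ ℝⁿ. -/
open MeasureTheory

noncomputable section

lemma aux_cost_zero (a b : ℝ) : cost 0 a b = 0 := by simp [cost]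

lemma aux_costA (d a b : ℝ) (hd : 0 < d) (hab : a ≤ b) (hf : b - a ≤ d) :
    5*d ≤ cost (6*d) a b := by
  unfold cost shrink
  split_ifs <;>
    first
      | linarith
      | exact le_trans (by linarith) (le_abs_self _)
      | exact le_trans (by linarith) (neg_le_abs _)

lemma aux_costA2 (d a b : ℝ) (hd : 0 < d) (hab : a ≤ b) (hf : b - a ≤ d)
    (h : cost (6*d) a b ≤ 5*d) : 0 ≤ a := by
  unfold cost shrink at h
  split_ifs at h <;> rw [abs_le] at h <;> linarith

lemma aux_costZlb (d a b : ℝ) (hd : 0 < d) (hab : a ≤ b) (hf : b - a ≤ d)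
    (h : cost (6*d) a b < 11*d/2) : 11*d/2 ≤ cost (-(6*d)) a b := by
  unfold cost shrink at h ⊢
  rw [abs_lt] at h
  split_ifs at h ⊢ <;>
    first
      | linarith
      | exact le_trans (by linarith) (le_abs_self _)
      | exact le_trans (by linarith) (neg_le_abs _)

set_option maxHeartbeats 1000000 in
lemma aux_costZuniq (d a b : ℝ) (hd : 0 < d) (hab : a ≤ b) (hf : b - a ≤ d)
    (h1 : cost (6*d) a b ≤ 11*d/2) (h2 : cost (-(6*d)) a b ≤ 11*d/2) :
    a = -(d/2) ∧ b = d/2 := by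
  unfold cost shrink at h1 h2
  rw [abs_le] at h1 h2
  split_ifs at h1 <;> split_ifs at h2 <;> constructor <;> linarith

lemma aux_cost_6d_0d (d : ℝ) (hd : 0 < d) : cost (6*d) 0 d = 5*d := by
  unfold cost shrink
  split_ifs <;>
    first
      | (rw [abs_of_nonneg (by linarith)]; linarith)
      | (rw [abs_of_nonpos (by linarith)]; linarith)
      | linarith

lemma aux_cost_neg2d (d a b : ℝ) (hd : 0 < d) (ha : 0 ≤ a) :
    cost (-(2*d)) a b = 2*d := by
  unfold cost shrink
  split_ifs <;>
    first
      | (rw [abs_of_nonneg (by linarith)]; linarith)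
      | (rw [abs_of_nonpos (by linarith)]; linarith)
      | linarith

lemma aux_cost_6d_half (d : ℝ) (hd : 0 < d) : cost (6*d) (-(d/2)) (d/2) = 11*d/2 := by
  unfold cost shrink
  split_ifs <;>
    first
      | (rw [abs_of_nonneg (by linarith)]; linarith)
      | (rw [abs_of_nonpos (by linarith)]; linarith)
      | linarith

lemma aux_cost_neg6d_half (d : ℝ) (hd : 0 < d) : cost (-(6*d)) (-(d/2)) (d/2) = 11*d/2 := by
  unfold cost shrink
  split_ifs <;>
    first
      | (rw [abs_of_nonneg (by linarith)]; linarith)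
      | (rw [abs_of_nonpos (by linarith)]; linarith)
      | linarith

lemma aux_cost_neg2d_half (d : ℝ) (hd : 0 < d) : cost (-(2*d)) (-(d/2)) (d/2) = 3*d/2 := by
  unfold cost shrink
  split_ifs <;>
    first
      | (rw [abs_of_nonneg (by linarith)]; linarith)
      | (rw [abs_of_nonpos (by linarith)]; linarith)
      | linarith

lemma aux_MC_ge (n : ℕ) (x : Fin n → ℝ) (a b : ℝ) (i : Fin n) :
    cost (x i) a b ≤ MC n x a b :=
  le_csSup (Set.Finite.bddAbove (Set.finite_range _)) ⟨i, rfl⟩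

lemma aux_MC_eq (n : ℕ) (x : Fin n → ℝ) (a b v : ℝ) (i : Fin n)
    (h : cost (x i) a b = v) (hub : ∀ j, cost (x j) a b ≤ v) : MC n x a b = v :=
  IsGreatest.csSup_eq ⟨⟨i, h⟩, by rintro w ⟨j, rfl⟩; exact hub j⟩

theorem stmt10 (n : ℕ) (hn : 2 ≤ n) (d : ℝ) (hd : 0 < d) :
    ¬ ∃ f : (Fin n → ℝ) → ℝ × ℝ,
      (∀ x : Fin n → ℝ, (f x).1 ≤ (f x).2 ∧ (f x).2 - (f x).1 ≤ d) ∧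
      (∀ (x : Fin n → ℝ) (i : Fin n) (xi' : ℝ),
        cost (x i) (f x).1 (f x).2 ≤
          cost (x i) (f (Function.update x i xi')).1 (f (Function.update x i xi')).2) ∧
      (∀ x : Fin n → ℝ, MC n x (f x).1 (f x).2 = OPTMC n d x) := by
  rintro ⟨f, hfeas, hSP, hopt⟩
  have h0 : (0 : ℕ) < n := by omega
  have h1 : (1 : ℕ) < n := by omega
  set i0 : Fin n := ⟨0, h0⟩ with hi0
  set i1 : Fin n := ⟨1, h1⟩ with hi1
  have hne : i1 ≠ i0 := by simp [hi0, hi1, Fin.ext_iff]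
  classical
  set y : Fin n → ℝ := fun j => if j = i0 then 6*d else if j = i1 then -(2*d) else 0 with hy
  set z : Fin n → ℝ := fun j => if j = i0 then 6*d else if j = i1 then -(6*d) else 0 with hz
  have hyi0 : y i0 = 6*d := by simp [hy]
  have hyi1 : y i1 = -(2*d) := by simp [hy, hne]
  have hzi0 : z i0 = 6*d := by simp [hz]
  have hzi1 : z i1 = -(6*d) := by simp [hz, hne]
  have hyz : Function.update y i1 (-(6*d)) = z := by
    funext j
    by_cases hj : j = i1
    · subst hj; simp [Function.update, hz, hne]
    · simp [Function.update, hj, hy, hz]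
  -- OPTMC for y is 5d
  have hMCy : MC n y 0 d = 5*d := by
    refine aux_MC_eq n y 0 d (5*d) i0 (by rw [hyi0]; exact aux_cost_6d_0d d hd) ?_
    intro j
    by_cases hj0 : j = i0
    · rw [hj0, hyi0, aux_cost_6d_0d d hd]
    · by_cases hj1 : j = i1
      · rw [hj1, hyi1, aux_cost_neg2d d 0 d hd le_rfl]; linarith
      · have : y j = 0 := by simp [hy, hj0, hj1]
        rw [this, aux_cost_zero]; linarith
  have hOPTy : OPTMC n d y = 5*d := by
    have hmem : (5*d) ∈ {v : ℝ | ∃ a b : ℝ, a ≤ b ∧ b - a ≤ d ∧ v = MC n y a b} :=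
      ⟨0, d, by linarith, by linarith, hMCy.symm⟩
    have hlb : ∀ v ∈ {v : ℝ | ∃ a b : ℝ, a ≤ b ∧ b - a ≤ d ∧ v = MC n y a b}, 5*d ≤ v := by
      rintro v ⟨a, b, hab, hf, rfl⟩
      calc 5*d ≤ cost (6*d) a b := aux_costA d a b hd hab hf
        _ = cost (y i0) a b := by rw [hyi0]
        _ ≤ MC n y a b := aux_MC_ge n y a b i0
    exact le_antisymm (csInf_le ⟨5*d, hlb⟩ hmem) (le_csInf ⟨5*d, hmem⟩ hlb)
  -- OPTMC for z is 11d/2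
  have hMCz : MC n z (-(d/2)) (d/2) = 11*d/2 := by
    refine aux_MC_eq n z (-(d/2)) (d/2) (11*d/2) i0
      (by rw [hzi0]; exact aux_cost_6d_half d hd) ?_
    intro j
    by_cases hj0 : j = i0
    · rw [hj0, hzi0, aux_cost_6d_half d hd]
    · by_cases hj1 : j = i1
      · rw [hj1, hzi1, aux_cost_neg6d_half d hd]
      · have : z j = 0 := by simp [hz, hj0, hj1]
        rw [this, aux_cost_zero]; linarith
  have hOPTz : OPTMC n d z = 11*d/2 := by
    have hmem : (11*d/2) ∈ {v : ℝ | ∃ a b : ℝ, a ≤ b ∧ b - a ≤ d ∧ v = MC n z a b} :=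
      ⟨-(d/2), d/2, by linarith, by linarith, hMCz.symm⟩
    have hlb : ∀ v ∈ {v : ℝ | ∃ a b : ℝ, a ≤ b ∧ b - a ≤ d ∧ v = MC n z a b}, 11*d/2 ≤ v := by
      rintro v ⟨a, b, hab, hf, rfl⟩
      rcases lt_or_ge (cost (6*d) a b) (11*d/2) with h | h
      · calc 11*d/2 ≤ cost (-(6*d)) a b := aux_costZlb d a b hd hab hf h
          _ = cost (z i1) a b := by rw [hzi1]
          _ ≤ MC n z a b := aux_MC_ge n z a b i1
      · calc 11*d/2 ≤ cost (6*d) a b := h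
          _ = cost (z i0) a b := by rw [hzi0]
          _ ≤ MC n z a b := aux_MC_ge n z a b i0
    exact le_antisymm (csInf_le ⟨11*d/2, hlb⟩ hmem) (le_csInf ⟨11*d/2, hmem⟩ hlb)
  -- properties of f y
  obtain ⟨haby, hfy⟩ := hfeas y
  have hMCfy : MC n y (f y).1 (f y).2 = 5*d := by rw [hopt y, hOPTy]
  have hc6y : cost (6*d) (f y).1 (f y).2 ≤ 5*d := by
    rw [← hMCfy, ← hyi0]; exact aux_MC_ge n y _ _ i0
  have hay : 0 ≤ (f y).1 := aux_costA2 d _ _ hd haby hfy hc6y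
  have hcy : cost (-(2*d)) (f y).1 (f y).2 = 2*d := aux_cost_neg2d d _ _ hd hay
  -- properties of f z
  obtain ⟨habz, hfz⟩ := hfeas z
  have hMCfz : MC n z (f z).1 (f z).2 = 11*d/2 := by rw [hopt z, hOPTz]
  have hc6z : cost (6*d) (f z).1 (f z).2 ≤ 11*d/2 := by
    rw [← hMCfz, ← hzi0]; exact aux_MC_ge n z _ _ i0
  have hc6z' : cost (-(6*d)) (f z).1 (f z).2 ≤ 11*d/2 := by
    rw [← hMCfz, ← hzi1]; exact aux_MC_ge n z _ _ i1
  obtain ⟨haz, hbz⟩ := aux_costZuniq d _ _ hd habz hfz hc6z hc6z'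
  have hcz : cost (-(2*d)) (f z).1 (f z).2 = 3*d/2 := by
    rw [haz, hbz]; exact aux_cost_neg2d_half d hd
  -- strategyproofness contradiction
  have hsp := hSP y i1 (-(6*d))
  rw [hyz, hyi1, hcy, hcz] at hsp
  linarith
end
end

section
/- Mechanism 3 is group strategyproof: for every location profile x ∈ ℝⁿ, every nonempty set of agents S ⊆ {1,…,n}, and every misreport x'_S ∈ ℝ^{|S|}, there exists an agent i ∈ S with c(xᵢ, f₃(x)) ≤ c(xᵢ, f₃(x'_S, x₋_S)), where f₃ denotes Mechanism 3 and (x'_S, x₋_S) is the profile in which agents in S report x'_S and all other agents report truthfully. -/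
open MeasureTheory

noncomputable section

set_option maxHeartbeats 1000000 in
lemma cost_mono_aux (d : ℝ) (hd : 0 < d) (a b t : ℝ) (hab : a ≤ b) (hb : b ≤ 0) (ht : b ≤ t) :
    cost t b (b + d) ≤ cost t a (a + d) := by
  unfold cost shrink
  split_ifs <;> (rw [← sq_le_sq]; try nlinarith)

set_option maxHeartbeats 1000000 in
lemma cost_mono_aux' (d : ℝ) (hd : 0 < d) (a b : ℝ) (hab : a < b) (hb : b ≤ 0) :
    cost a a (a + d) ≤ cost a b (b + d) := by
  unfold cost shrink
  split_ifs <;> (rw [← sq_le_sq]; try nlinarith)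

theorem stmt11 (n : ℕ) (hn : 1 ≤ n) (d : ℝ) (hd : 0 < d) (x : Fin n → ℝ)
    (S : Finset (Fin n)) (hS : S.Nonempty) (x' : Fin n → ℝ) :
    ∃ i ∈ S,
      cost (x i) (mech3 n d x).1 (mech3 n d x).2 ≤
        cost (x i) (mech3 n d (misreport n S x x')).1 (mech3 n d (misreport n S x x')).2 := by
  have hne : Nonempty (Fin n) := ⟨⟨0, hn⟩⟩
  set y := misreport n S x x' with hy
  set m := min (xleft n x) 0 with hm
  set m' := min (xleft n y) 0 with hm'
  have hmem := (Set.range_nonempty x).csInf_mem (Set.finite_range x)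
  obtain ⟨i0, hi0⟩ := hmem
  have hle : ∀ i, xleft n x ≤ x i := fun i =>
    csInf_le (Set.finite_range x).bddBelow ⟨i, rfl⟩
  have hley : ∀ i, xleft n y ≤ y i := fun i =>
    csInf_le (Set.finite_range y).bddBelow ⟨i, rfl⟩
  have hmech : mech3 n d x = (m, m + d) := rfl
  have hmech' : mech3 n d y = (m', m' + d) := rfl
  rcases le_or_gt m' m with h | h
  · obtain ⟨i, hiS⟩ := hS
    refine ⟨i, hiS, ?_⟩
    rw [hmech, hmech']
    exact cost_mono_aux d hd m' m (x i) h (min_le_right _ _)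
      (le_trans (min_le_left _ _) (hle i))
  · have hm0 : m < 0 := lt_of_lt_of_le h (min_le_right _ _)
    have hx0 : xleft n x ≤ 0 := by
      by_contra hc
      push_neg at hc
      rw [hm, min_eq_right hc.le] at hm0
      exact lt_irrefl 0 hm0
    have hmx : m = xleft n x := by rw [hm, min_eq_left hx0]
    have hiS : i0 ∈ S := by
      by_contra hns
      have hyx : y i0 = x i0 := by simp [hy, misreport, hns]
      have h1 : xleft n y ≤ xleft n x := by
        have h2 : xleft n x = x i0 := hi0.symm
        rw [h2, ← hyx]; exact hley i0
      have : m' ≤ m := by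
        rw [hm, hm']
        exact min_le_min h1 le_rfl
      linarith
    refine ⟨i0, hiS, ?_⟩
    have hxi0 : x i0 = m := by rw [hmx]; exact hi0
    rw [hmech, hmech', hxi0]
    exact cost_mono_aux' d hd m m' h (min_le_right _ _)
end
end

section
/- Mechanism 3 is not strongly group strategyproof: for every even n ≥ 2 and every d > 0, there exist a location profile x ∈ ℝⁿ, a nonempty set S ⊆ {1,…,n}, and a misreport x'_S ∈ ℝ^{|S|} such that c(xᵢ, f₃(x'_S, x₋_S)) ≤ c(xᵢ, f₃(x)) for all i ∈ S and c(xⱼ, f₃(x'_S, x₋_S)) < c(xⱼ, f₃(x)) for some j ∈ S, where f₃ denotes Mechanism 3. -/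
open MeasureTheory

noncomputable section

lemma shrink_of_le {a b t : ℝ} (h : t ≤ a) : shrink a b t = t := if_pos h

lemma shrink_of_mem {a b t : ℝ} (ha : a ≤ t) (hb : t ≤ b) :
    shrink a b t = a := by
  unfold shrink
  split_ifs <;> linarith

lemma shrink_of_ge {a b t : ℝ} (hab : a ≤ b) (h : b ≤ t) : shrink a b t = t - (b - a) := by
  unfold shrink
  split_ifs <;> linarith

lemma cost_of_le_of_mem {a b t : ℝ} (ht : t ≤ a) (ha : a ≤ 0) (hb : 0 ≤ b) :
    cost t a b = a - t := by
  rw [cost, shrink_of_le ht, shrink_of_mem ha hb, abs_of_nonpos (by linarith)]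
  ring

lemma cost_of_mem_of_mem {a b t : ℝ} (ha : a ≤ t) (hb : t ≤ b) (ha0 : a ≤ 0) (hb0 : 0 ≤ b) :
    cost t a b = 0 := by
  rw [cost, shrink_of_mem ha hb, shrink_of_mem ha0 hb0, sub_self, abs_zero]

lemma cost_of_le_of_neg {a b t : ℝ} (hab : a ≤ b) (ht : t ≤ a) (hb : b < 0) :
    cost t a b = a - b - t := by
  rw [cost, shrink_of_le ht, shrink_of_ge hab hb.le, abs_of_nonpos (by linarith)]
  ring

lemma cost_of_ge_of_nonpos {a b t : ℝ} (hab : a ≤ b) (ht : b ≤ t) (hb : b ≤ 0) :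
    cost t a b = |t| := by
  rw [cost, shrink_of_ge hab ht, shrink_of_ge hab hb]
  ring_nf

lemma misreport_univ (n : ℕ) (x x' : Fin n → ℝ) : misreport n Finset.univ x x' = x' := by
  funext j
  simp [misreport]

lemma mech3_of_isLeast {n : ℕ} (d : ℝ) {x : Fin n → ℝ} {m : ℝ} (hm : IsLeast (Set.range x) m)
    (hm0 : m ≤ 0) : mech3 n d x = (m, m + d) := by
  rw [mech3, xleft, hm.csInf_eq, min_eq_left hm0]

theorem stmt15_general (n : ℕ) (hn : 2 ≤ n) (d : ℝ) (hd : 0 < d) :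
    ∃ (x : Fin n → ℝ) (S : Finset (Fin n)) (x' : Fin n → ℝ), S.Nonempty ∧
      (∀ i ∈ S,
        cost (x i) (mech3 n d (misreport n S x x')).1 (mech3 n d (misreport n S x x')).2 ≤
          cost (x i) (mech3 n d x).1 (mech3 n d x).2) ∧
      (∃ j ∈ S,
        cost (x j) (mech3 n d (misreport n S x x')).1 (mech3 n d (misreport n S x x')).2 <
          cost (x j) (mech3 n d x).1 (mech3 n d x).2) := by
  -- Agent 1 sits at -d/2 and everybody else at -3d, so the range is [-3d, -2d]. If all report -d,
  -- the range moves to [-d, 0]: agent 1 then costs 0 instead of d/2, the others still cost 2d.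
  let i₀ : Fin n := ⟨0, by omega⟩
  let i₁ : Fin n := ⟨1, by omega⟩
  let x : Fin n → ℝ := fun i => if i = i₁ then -d / 2 else -3 * d
  have hx_least : IsLeast (Set.range x) (-3 * d) := by
    refine ⟨⟨i₀, if_neg (by simp [i₀, i₁, Fin.ext_iff])⟩, ?_⟩
    rintro _ ⟨i, rfl⟩
    by_cases h : i = i₁ <;> simp only [x, h, if_true, if_false] <;> linarith
  have h_truthful : mech3 n d x = (-3 * d, -3 * d + d) := mech3_of_isLeast d hx_least (by linarith)
  have h_deviation : mech3 n d (fun _ => -d) = (-d, -d + d) :=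
    mech3_of_isLeast d ⟨⟨i₀, rfl⟩, by rintro _ ⟨_, rfl⟩; rfl⟩ (by linarith)
  have h_far : cost (-3 * d) (-d) (-d + d) = cost (-3 * d) (-3 * d) (-3 * d + d) := by
    rw [cost_of_le_of_mem (by linarith) (by linarith) (by linarith),
      cost_of_le_of_neg (by linarith) le_rfl (by linarith)]
    ring
  have h_near : cost (-d / 2) (-d) (-d + d) < cost (-d / 2) (-3 * d) (-3 * d + d) := by
    rw [cost_of_mem_of_mem (by linarith) (by linarith) (by linarith) (by linarith),
      cost_of_ge_of_nonpos (by linarith) (by linarith) (by linarith), abs_of_neg (by linarith)]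
    linarith
  refine ⟨x, Finset.univ, fun _ => -d, Finset.univ_nonempty_iff.mpr ⟨i₀⟩, ?_,
    ⟨i₁, Finset.mem_univ _, ?_⟩⟩
  · intro i _
    rw [misreport_univ, h_truthful, h_deviation]
    by_cases h : i = i₁
    · simp only [x, h, if_true]
      exact h_near.le
    · simp only [x, h, if_false]
      exact h_far.le
  · rw [misreport_univ, h_truthful, h_deviation]
    simpa [x] using h_near

theorem stmt15 (n : ℕ) (hn : 2 ≤ n) (heven : Even n) (d : ℝ) (hd : 0 < d) :
    ∃ (x : Fin n → ℝ) (S : Finset (Fin n)) (x' : Fin n → ℝ), S.Nonempty ∧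
      (∀ i ∈ S,
        cost (x i) (mech3 n d (misreport n S x x')).1 (mech3 n d (misreport n S x x')).2 ≤
          cost (x i) (mech3 n d x).1 (mech3 n d x).2) ∧
      (∃ j ∈ S,
        cost (x j) (mech3 n d (misreport n S x x')).1 (mech3 n d (misreport n S x x')).2 <
          cost (x j) (mech3 n d x).1 (mech3 n d x).2) :=
  stmt15_general n hn d hd
end
end

section
/- Mechanism 2 is a 2-approximation for the maximum cost: for every n ≥ 1 and every location profile x ∈ ℝⁿ, MC(x, f₂(x)) ≤ 2 · MC(x, a, b) for every feasible range (a,b), where f₂ denotes Mechanism 2. -/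
open MeasureTheory

noncomputable section

lemma shrink_mono' (a b : ℝ) (hab : a ≤ b) {s t : ℝ} (hst : t ≤ s) :
    shrink a b t ≤ shrink a b s := by
  unfold shrink; split_ifs <;> linarith

lemma shrink_lb (a b : ℝ) (hab : a ≤ b) {s t : ℝ} (hst : t ≤ s) :
    s - t - (b - a) ≤ shrink a b s - shrink a b t := by
  unfold shrink; split_ifs <;> linarith

lemma cost_lb (t a b : ℝ) (hab : a ≤ b) : |t| - (b - a) ≤ cost t a b := by
  unfold cost
  rcases le_total 0 t with h | h
  · have h1 := shrink_lb a b hab h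
    have h2 := shrink_mono' a b hab h
    rw [abs_of_nonneg h,
      abs_of_nonneg (by linarith : (0:ℝ) ≤ shrink a b t - shrink a b 0)]
    linarith
  · have h1 := shrink_lb a b hab h
    have h2 := shrink_mono' a b hab h
    rw [abs_of_nonpos h,
      abs_of_nonpos (by linarith : shrink a b t - shrink a b 0 ≤ (0:ℝ))]
    linarith

lemma cost_pair (a b s t : ℝ) (hab : a ≤ b) (hst : t ≤ s) :
    s - t - (b - a) ≤ cost s a b + cost t a b := by
  have h1 := shrink_lb a b hab hst
  have h2 : |shrink a b s - shrink a b t| ≤ cost s a b + cost t a b := by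
    unfold cost
    calc |shrink a b s - shrink a b t|
        ≤ |shrink a b s - shrink a b 0| + |shrink a b 0 - shrink a b t| :=
          abs_sub_le _ _ _
      _ = |shrink a b s - shrink a b 0| + |shrink a b t - shrink a b 0| := by
          rw [abs_sub_comm (shrink a b 0)]
  have h3 : shrink a b s - shrink a b t ≤ |shrink a b s - shrink a b t| :=
    le_abs_self _
  linarith

lemma cost_eval (t a b : ℝ) (hab : a ≤ b) (ha : a ≤ 0) (hb : 0 ≤ b) :
    cost t a b = if t ≤ a then a - t else if t ≤ b then 0 else t - b := by
  unfold cost shrink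
  split_ifs <;> first
    | (rw [abs_of_nonpos (by linarith)]; linarith)
    | (rw [abs_of_nonneg (by linarith)]; linarith)
    | linarith

theorem stmt16 (n : ℕ) (hn : 1 ≤ n) (d : ℝ) (hd : 0 < d) (x : Fin n → ℝ)
    (a b : ℝ) (hab : a ≤ b) (hba : b - a ≤ d) :
    MC n x (mech2 n d x).1 (mech2 n d x).2 ≤ 2 * MC n x a b := by
  have hne : Nonempty (Fin n) := ⟨⟨0, hn⟩⟩
  have hrne : (Set.range x).Nonempty := Set.range_nonempty x
  have hfin : (Set.range x).Finite := Set.finite_range x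
  -- leftmost agent
  obtain ⟨j, hj⟩ : ∃ j, x j = xleft n x := by
    have := hrne.csInf_mem hfin
    exact this
  have hlb : ∀ i, xleft n x ≤ x i := fun i =>
    csInf_le hfin.bddBelow ⟨i, rfl⟩
  set MCab := MC n x a b with hMC
  have hkey : ∀ i, cost (x i) a b ≤ MCab := fun i =>
    le_csSup (Set.finite_range _).bddAbove ⟨i, rfl⟩
  have hMC0 : 0 ≤ MCab :=
    le_trans (cost_nonneg' (x j) a b) (hkey j)
  -- per agent bound under mech2
  have hbound : ∀ i,
      cost (x i) (mech2 n d x).1 (mech2 n d x).2 ≤ 2 * MCab := by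
    intro i
    have hli := hlb i
    have hclb : |x i| - (b - a) ≤ cost (x i) a b := cost_lb _ a b hab
    have hki := hkey i
    have hkj := hkey j
    have hpair : x i - xleft n x - (b - a) ≤ cost (x i) a b + cost (x j) a b := by
      have := cost_pair a b (x i) (x j) hab (by rw [hj]; exact hli)
      linarith [this, hj ▸ this]
    unfold mech2
    split_ifs with h1 h2
    · -- output (0, d)
      simp only
      rw [cost_eval _ 0 d (le_of_lt hd) le_rfl (le_of_lt hd)]
      split_ifs with hA hB
      · have : 0 ≤ x i := le_trans h1 hli
        nlinarith
      · nlinarith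
      · have : x i - d ≤ |x i| - (b - a) := by
          rcases abs_cases (x i) with ⟨h, _⟩ | ⟨h, _⟩ <;> linarith
        nlinarith
    · -- output (-d, 0)
      simp only
      rw [cost_eval _ (-d) 0 (by linarith) (by linarith) le_rfl]
      split_ifs with hA hB
      · have : -d - x i ≤ |x i| - (b - a) := by
          rcases abs_cases (x i) with ⟨h, _⟩ | ⟨h, _⟩ <;> linarith
        nlinarith
      · nlinarith
      · -- x i > 0, cost = x i - 0 = x i
        have h3 : x i ≤ x i - xleft n x - (b - a) := by linarith
        have := hkey i
        have := hkey j
        nlinarith [hpair]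
    · -- output (xl, xl + d)
      push_neg at h1 h2
      simp only
      rw [cost_eval _ (xleft n x) (xleft n x + d) (by linarith)
        (le_of_lt h1) (by linarith)]
      split_ifs with hA hB
      · nlinarith
      · nlinarith
      · have h3 : x i - (xleft n x + d) ≤ x i - xleft n x - (b - a) := by
          linarith
        have := hkey i
        have := hkey j
        nlinarith [hpair]
  -- conclude
  unfold MC
  exact csSup_le (Set.range_nonempty _) (by rintro v ⟨i, rfl⟩; exact hbound i)
end
end
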